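/- arXiv:2601.23030 — 6 statements merged into one kernel-verified Lean document; each statement's English description precedes it below -/
import Mathlib

section
/- Let (V, r, pa) be a finite rooted tree with non-root vertices V⁺ and leaves L, let d ≥ 1, and fix a root state x₀ ∈ ℝᵈ. For each v ∈ V⁺ let p_v, q_v : ℝᵈ × ℝᵈ → ℝ be measurable, strictly positive functions that are probability densities in their first argument (∫ p_v(x', x) dx' = 1 and ∫ q_v(x', x) dx' = 1 for every x ∈ ℝᵈ), and for each leaf l ∈ L let ℓ_l : ℝᵈ → ℝ be measurable and strictly positive. For a configuration x ∈ (ℝᵈ)^{V⁺} write x_r := x₀. Assume the evidence Z := ∫_{(ℝᵈ)^{V⁺}} ∏_{v∈V⁺} p_v(x_v, x_{pa(v)}) · ∏_{l∈L} ℓ_l(x_l) dx is finite and strictly positive, let Π be the probability measure on (ℝᵈ)^{V⁺} with density x ↦ Z⁻¹ ∏_{v∈V⁺} p_v(x_v, x_{pa(v)}) ∏_{l∈L} ℓ_l(x_l) with respect to the product Lebesgue measure, and let Q be the measure with density x ↦ ∏_{v∈V⁺} q_v(x_v, x_{pa(v)}); assume Q is a probability measure. If the functions x ↦ log(q_v(x_v,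 x_{pa(v)})/p_v(x_v, x_{pa(v)})) (for each v ∈ V⁺) and x ↦ log ℓ_l(x_l) (for each l ∈ L) are Q-integrable, then the Kullback–Leibler divergence satisfies KL(Q ‖ Π) = Σ_{v∈V⁺} E_Q[log(q_v(x_v, x_{pa(v)})/p_v(x_v, x_{pa(v)}))] − Σ_{l∈L} E_Q[log ℓ_l(x_l)] + log Z. -/
open MeasureTheory Finset

noncomputable section

/-- Children of `v` in the rooted tree `(V, r, pa)`: non-root vertices whose parent is `v`. -/
def childSet {V : Type*} [Fintype V] [DecidableEq V] (r : V) (pa : V → V) (v : V) :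
    Finset V :=
  Finset.univ.filter fun w => w ≠ r ∧ pa w = v

/-- Leaves of the rooted tree: vertices with no children. -/
def treeLeaves {V : Type*} [Fintype V] [DecidableEq V] (r : V) (pa : V → V) : Finset V :=
  Finset.univ.filter fun v => childSet r pa v = ∅

/-- Extend a configuration on the non-root vertices to all of `V` by pinning the root at `x₀`. -/
def extCfg {V : Type*} [DecidableEq V] (r : V) {d : ℕ} (x₀ : Fin d → ℝ)
    (x : {v : V // v ≠ r} → Fin d → ℝ) (v : V) : Fin d → ℝ :=
  if h : v = r then x₀ else x ⟨v, h⟩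

/-- Product over the non-root vertices of transition densities `p_v(x_v, x_{pa v})`. -/
def prodTrans {V : Type*} [Fintype V] [DecidableEq V] (r : V) (pa : V → V) {d : ℕ}
    (x₀ : Fin d → ℝ) (p : V → (Fin d → ℝ) × (Fin d → ℝ) → ℝ)
    (x : {v : V // v ≠ r} → Fin d → ℝ) : ℝ :=
  ∏ v : {v : V // v ≠ r}, p v.1 (x v, extCfg r x₀ x (pa v.1))

/-- Product over the leaves of the observation likelihoods `ℓ_l(x_l)`. -/
def prodLik {V : Type*} [Fintype V] [DecidableEq V] (r : V) (pa : V → V) {d : ℕ}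
    (x₀ : Fin d → ℝ) (ℓ : V → (Fin d → ℝ) → ℝ)
    (x : {v : V // v ≠ r} → Fin d → ℝ) : ℝ :=
  ∏ l ∈ treeLeaves r pa, ℓ l (extCfg r x₀ x l)

/-- Kullback–Leibler divergence `KL(Q ‖ P) = ∫ log (dQ/dP) dQ`. -/
def klDivergence {α : Type*} [MeasurableSpace α] (Q P : Measure α) : ℝ :=
  ∫ x, Real.log (Q.rnDeriv P x).toReal ∂Q

theorem stmt0 {V : Type*} [Fintype V] [DecidableEq V]
    -- rooted tree
    (r : V) (pa : V → V) (hroot : pa r = r) (hreach : ∀ v : V, ∃ n : ℕ, pa^[n] v = r)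
    -- dimension and root state
    {d : ℕ} (hd : 1 ≤ d) (x₀ : Fin d → ℝ)
    -- transition densities
    (p q : V → (Fin d → ℝ) × (Fin d → ℝ) → ℝ)
    (hpm : ∀ v : V, v ≠ r → Measurable (p v)) (hqm : ∀ v : V, v ≠ r → Measurable (q v))
    (hppos : ∀ v : V, v ≠ r → ∀ y, 0 < p v y) (hqpos : ∀ v : V, v ≠ r → ∀ y, 0 < q v y)
    (hpdens : ∀ v : V, v ≠ r → ∀ x : Fin d → ℝ, (∫ x', p v (x', x)) = 1)
    (hqdens : ∀ v : V, v ≠ r → ∀ x : Fin d → ℝ, (∫ x', q v (x', x)) = 1)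
    -- leaf likelihoods
    (ℓ : V → (Fin d → ℝ) → ℝ)
    (hℓm : ∀ l ∈ treeLeaves r pa, Measurable (ℓ l))
    (hℓpos : ∀ l ∈ treeLeaves r pa, ∀ y, 0 < ℓ l y)
    -- evidence: finite and strictly positive
    (Z : ℝ) (hZdef : Z = ∫ x, prodTrans r pa x₀ p x * prodLik r pa x₀ ℓ x)
    (hZfin : Integrable fun x => prodTrans r pa x₀ p x * prodLik r pa x₀ ℓ x)
    (hZpos : 0 < Z)
    -- posterior and variational measures
    (Pi Q : Measure ({v : V // v ≠ r} → Fin d → ℝ))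
    (hPi : Pi = volume.withDensity fun x =>
      ENNReal.ofReal (Z⁻¹ * (prodTrans r pa x₀ p x * prodLik r pa x₀ ℓ x)))
    (hQ : Q = volume.withDensity fun x => ENNReal.ofReal (prodTrans r pa x₀ q x))
    (hQprob : IsProbabilityMeasure Q)
    -- integrability of the log terms
    (hlogpq : ∀ v : {v : V // v ≠ r},
      Integrable (fun x => Real.log
        (q v.1 (x v, extCfg r x₀ x (pa v.1)) / p v.1 (x v, extCfg r x₀ x (pa v.1)))) Q)
    (hlogℓ : ∀ l ∈ treeLeaves r pa,
      Integrable (fun x => Real.log (ℓ l (extCfg r x₀ x l))) Q) :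
    klDivergence Q Pi =
      (∑ v : {v : V // v ≠ r}, ∫ x, Real.log
        (q v.1 (x v, extCfg r x₀ x (pa v.1)) / p v.1 (x v, extCfg r x₀ x (pa v.1))) ∂Q)
      - (∑ l ∈ treeLeaves r pa, ∫ x, Real.log (ℓ l (extCfg r x₀ x l)) ∂Q)
      + Real.log Z := by
  classical
  set α := ({v : V // v ≠ r} → Fin d → ℝ)
  set f : α → ℝ := fun x => prodTrans r pa x₀ q x with hf
  set g : α → ℝ := fun x => Z⁻¹ * (prodTrans r pa x₀ p x * prodLik r pa x₀ ℓ x) with hg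
  -- positivity
  have hext : ∀ (w : V), Measurable fun x : α => extCfg r x₀ x w := by
    intro w
    unfold extCfg
    by_cases h : w = r
    · simp only [h, dif_pos]; exact measurable_const
    · simp only [h, dif_neg, not_false_iff]; exact measurable_pi_apply _
  have hfac : ∀ (s : V → (Fin d → ℝ) × (Fin d → ℝ) → ℝ),
      (∀ v : V, v ≠ r → Measurable (s v)) →
      ∀ v : {v : V // v ≠ r},
        Measurable fun x : α => s v.1 (x v, extCfg r x₀ x (pa v.1)) := by
    intro s hs v
    exact (hs v.1 v.2).comp ((measurable_pi_apply v).prodMk (hext (pa v.1)))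
  have hfmeas : Measurable f := by
    apply Finset.measurable_prod
    intro v _
    exact hfac q hqm v
  have hpTmeas : Measurable fun x : α => prodTrans r pa x₀ p x := by
    apply Finset.measurable_prod
    intro v _
    exact hfac p hpm v
  have hLmeas : Measurable fun x : α => prodLik r pa x₀ ℓ x := by
    apply Finset.measurable_prod
    intro l hl
    exact (hℓm l hl).comp (hext l)
  have hgmeas : Measurable g :=
    measurable_const.mul (hpTmeas.mul hLmeas)
  have hfpos : ∀ x, 0 < f x := fun x =>
    Finset.prod_pos fun v _ => hqpos v.1 v.2 _
  have hpTpos : ∀ x, 0 < prodTrans r pa x₀ p x := fun x =>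
    Finset.prod_pos fun v _ => hppos v.1 v.2 _
  have hLpos : ∀ x, 0 < prodLik r pa x₀ ℓ x := fun x =>
    Finset.prod_pos fun l hl => hℓpos l hl _
  have hgpos : ∀ x, 0 < g x := fun x =>
    mul_pos (inv_pos.2 hZpos) (mul_pos (hpTpos x) (hLpos x))
  -- Q = Pi.withDensity h
  set h : α → ENNReal := fun x => ENNReal.ofReal (f x / g x) with hh
  have hhmeas : Measurable h := (hfmeas.div hgmeas).ennreal_ofReal
  have hQ' : Q = Pi.withDensity h := by
    rw [hPi, ← withDensity_mul _ hgmeas.ennreal_ofReal hhmeas, hQ]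
    congr 1
    funext x
    show ENNReal.ofReal (f x) = ENNReal.ofReal (g x) * ENNReal.ofReal (f x / g x)
    rw [← ENNReal.ofReal_mul (hgpos x).le, mul_div_cancel₀ _ (hgpos x).ne']
  have : SigmaFinite Pi := by
    rw [hPi]; infer_instance
  have hae : Q.rnDeriv Pi =ᵐ[Q] h := by
    have h1 : Q.rnDeriv Pi =ᵐ[Pi] h := by
      rw [hQ']
      exact Measure.rnDeriv_withDensity Pi hhmeas
    have hac : Q ≪ Pi := by rw [hQ']; exact withDensity_absolutelyContinuous _ _
    exact hac.ae_le h1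
  -- pointwise identity for the log
  have hpt : ∀ x : α, Real.log (f x / g x) =
      (∑ v : {v : V // v ≠ r}, Real.log
        (q v.1 (x v, extCfg r x₀ x (pa v.1)) / p v.1 (x v, extCfg r x₀ x (pa v.1))))
      - (∑ l ∈ treeLeaves r pa, Real.log (ℓ l (extCfg r x₀ x l)))
      + Real.log Z := by
    intro x
    have h1 : Real.log (f x / g x) = Real.log (f x) - Real.log (g x) :=
      Real.log_div (hfpos x).ne' (hgpos x).ne'
    have h2 : Real.log (f x) = ∑ v : {v : V // v ≠ r},
        Real.log (q v.1 (x v, extCfg r x₀ x (pa v.1))) := by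
      exact Real.log_prod fun v _ => (hqpos v.1 v.2 _).ne'
    have h3 : Real.log (prodTrans r pa x₀ p x) = ∑ v : {v : V // v ≠ r},
        Real.log (p v.1 (x v, extCfg r x₀ x (pa v.1))) := by
      exact Real.log_prod fun v _ => (hppos v.1 v.2 _).ne'
    have h4 : Real.log (prodLik r pa x₀ ℓ x) = ∑ l ∈ treeLeaves r pa,
        Real.log (ℓ l (extCfg r x₀ x l)) :=
      Real.log_prod fun l hl => (hℓpos l hl _).ne'
    have h5 : Real.log (g x) = -Real.log Z + Real.log (prodTrans r pa x₀ p x)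
        + Real.log (prodLik r pa x₀ ℓ x) := by
      rw [hg]
      rw [Real.log_mul (inv_pos.2 hZpos).ne' (mul_pos (hpTpos x) (hLpos x)).ne',
        Real.log_mul (hpTpos x).ne' (hLpos x).ne', Real.log_inv]
      ring
    have h6 : ∀ v : {v : V // v ≠ r},
        Real.log (q v.1 (x v, extCfg r x₀ x (pa v.1)) / p v.1 (x v, extCfg r x₀ x (pa v.1)))
        = Real.log (q v.1 (x v, extCfg r x₀ x (pa v.1)))
          - Real.log (p v.1 (x v, extCfg r x₀ x (pa v.1))) := fun v =>
      Real.log_div (hqpos v.1 v.2 _).ne' (hppos v.1 v.2 _).ne'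
    rw [h1, h2, h5, h3, h4]
    rw [Finset.sum_congr rfl fun v _ => h6 v, Finset.sum_sub_distrib]
    ring
  -- rewrite the KL integrand
  have hklint : klDivergence Q Pi = ∫ x, Real.log (f x / g x) ∂Q := by
    unfold klDivergence
    refine integral_congr_ae (hae.mono fun x hx => ?_)
    show Real.log (Q.rnDeriv Pi x).toReal = Real.log (f x / g x)
    rw [hx]
    simp only [hh]
    rw [ENNReal.toReal_ofReal (div_nonneg (hfpos x).le (hgpos x).le)]
  rw [hklint]
  have hint1 : Integrable (fun x : α => ∑ v : {v : V // v ≠ r}, Real.log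
      (q v.1 (x v, extCfg r x₀ x (pa v.1)) / p v.1 (x v, extCfg r x₀ x (pa v.1)))) Q :=
    integrable_finset_sum _ fun v _ => hlogpq v
  have hint2 : Integrable (fun x : α => ∑ l ∈ treeLeaves r pa,
      Real.log (ℓ l (extCfg r x₀ x l))) Q :=
    integrable_finset_sum _ fun l hl => hlogℓ l hl
  calc ∫ x, Real.log (f x / g x) ∂Q
      = ∫ x, ((∑ v : {v : V // v ≠ r}, Real.log
          (q v.1 (x v, extCfg r x₀ x (pa v.1)) / p v.1 (x v, extCfg r x₀ x (pa v.1))))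
        - (∑ l ∈ treeLeaves r pa, Real.log (ℓ l (extCfg r x₀ x l)))
        + Real.log Z) ∂Q := by
        exact integral_congr_ae (Filter.Eventually.of_forall fun x => hpt x)
    _ = (∑ v : {v : V // v ≠ r}, ∫ x, Real.log
          (q v.1 (x v, extCfg r x₀ x (pa v.1)) / p v.1 (x v, extCfg r x₀ x (pa v.1))) ∂Q)
        - (∑ l ∈ treeLeaves r pa, ∫ x, Real.log (ℓ l (extCfg r x₀ x l)) ∂Q)
        + Real.log Z := by
        have e1 : (∫ x, ((∑ v : {v : V // v ≠ r}, Real.log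
              (q v.1 (x v, extCfg r x₀ x (pa v.1)) / p v.1 (x v, extCfg r x₀ x (pa v.1))))
            - (∑ l ∈ treeLeaves r pa, Real.log (ℓ l (extCfg r x₀ x l)))
            + Real.log Z) ∂Q)
            = (∫ x, ((∑ v : {v : V // v ≠ r}, Real.log
              (q v.1 (x v, extCfg r x₀ x (pa v.1)) / p v.1 (x v, extCfg r x₀ x (pa v.1))))
            - (∑ l ∈ treeLeaves r pa, Real.log (ℓ l (extCfg r x₀ x l)))) ∂Q)
            + ∫ _x, Real.log Z ∂Q :=
          integral_add (hint1.sub hint2) (integrable_const _)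
        have e2 : (∫ x, ((∑ v : {v : V // v ≠ r}, Real.log
              (q v.1 (x v, extCfg r x₀ x (pa v.1)) / p v.1 (x v, extCfg r x₀ x (pa v.1))))
            - (∑ l ∈ treeLeaves r pa, Real.log (ℓ l (extCfg r x₀ x l)))) ∂Q)
            = (∫ x, (∑ v : {v : V // v ≠ r}, Real.log
              (q v.1 (x v, extCfg r x₀ x (pa v.1)) / p v.1 (x v, extCfg r x₀ x (pa v.1)))) ∂Q)
            - ∫ x, (∑ l ∈ treeLeaves r pa, Real.log (ℓ l (extCfg r x₀ x l))) ∂Q :=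
          integral_sub hint1 hint2
        rw [e1, e2, integral_const, probReal_univ,
          integral_finset_sum _ fun v _ => hlogpq v,
          integral_finset_sum _ fun l hl => hlogℓ l hl]
        simp

end
end

section
/- Let (V, r, pa) be a finite rooted tree with non-root vertices V⁺ and leaves L, let d ≥ 1, and fix a root state x₀ ∈ ℝᵈ. For each v ∈ V⁺ let p_v, q_v : ℝᵈ × ℝᵈ → ℝ be measurable, strictly positive functions that are probability densities in their first argument, and for each leaf l ∈ L let ℓ_l : ℝᵈ → ℝ be measurable and strictly positive. Writing x_r := x₀ for configurations x ∈ (ℝᵈ)^{V⁺}, assume the evidence Z := ∫ ∏_{v∈V⁺} p_v(x_v, x_{pa(v)}) ∏_{l∈L} ℓ_l(x_l) dx is finite and strictly positive, let Q be the measure on (ℝᵈ)^{V⁺} with density ∏_{v∈V⁺} q_v(x_v, x_{pa(v)}) with respect to the product Lebesgue measure, assume Q is a probability measure, and assume the relevant log terms are Q-integrable. Then the negative ELBO is bounded below by the negative log-evidence: Σ_{v∈V⁺} E_Q[log(q_v(x_v, x_{pa(v)})/p_v(x_v, x_{pa(v)}))] − Σ_{l∈L} E_Q[log ℓ_l(x_l)]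 ≥ −log Z. -/
open MeasureTheory Finset

noncomputable section

theorem stmt1 {V : Type*} [Fintype V] [DecidableEq V]
    -- rooted tree
    (r : V) (pa : V → V) (hroot : pa r = r) (hreach : ∀ v : V, ∃ n : ℕ, pa^[n] v = r)
    -- dimension and root state
    {d : ℕ} (hd : 1 ≤ d) (x₀ : Fin d → ℝ)
    -- transition densities
    (p q : V → (Fin d → ℝ) × (Fin d → ℝ) → ℝ)
    (hpm : ∀ v : V, v ≠ r → Measurable (p v)) (hqm : ∀ v : V, v ≠ r → Measurable (q v))
    (hppos : ∀ v : V, v ≠ r → ∀ y, 0 < p v y) (hqpos : ∀ v : V, v ≠ r → ∀ y, 0 < q v y)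
    (hpdens : ∀ v : V, v ≠ r → ∀ x : Fin d → ℝ, (∫ x', p v (x', x)) = 1)
    (hqdens : ∀ v : V, v ≠ r → ∀ x : Fin d → ℝ, (∫ x', q v (x', x)) = 1)
    -- leaf likelihoods
    (ℓ : V → (Fin d → ℝ) → ℝ)
    (hℓm : ∀ l ∈ treeLeaves r pa, Measurable (ℓ l))
    (hℓpos : ∀ l ∈ treeLeaves r pa, ∀ y, 0 < ℓ l y)
    -- evidence: finite and strictly positive
    (Z : ℝ) (hZdef : Z = ∫ x, prodTrans r pa x₀ p x * prodLik r pa x₀ ℓ x)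
    (hZfin : Integrable fun x => prodTrans r pa x₀ p x * prodLik r pa x₀ ℓ x)
    (hZpos : 0 < Z)
    -- variational measure
    (Q : Measure ({v : V // v ≠ r} → Fin d → ℝ))
    (hQ : Q = volume.withDensity fun x => ENNReal.ofReal (prodTrans r pa x₀ q x))
    (hQprob : IsProbabilityMeasure Q)
    -- integrability of the log terms
    (hlogpq : ∀ v : {v : V // v ≠ r},
      Integrable (fun x => Real.log
        (q v.1 (x v, extCfg r x₀ x (pa v.1)) / p v.1 (x v, extCfg r x₀ x (pa v.1)))) Q)
    (hlogℓ : ∀ l ∈ treeLeaves r pa,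
      Integrable (fun x => Real.log (ℓ l (extCfg r x₀ x l))) Q) :
    (∑ v : {v : V // v ≠ r}, ∫ x, Real.log
        (q v.1 (x v, extCfg r x₀ x (pa v.1)) / p v.1 (x v, extCfg r x₀ x (pa v.1))) ∂Q)
      - (∑ l ∈ treeLeaves r pa, ∫ x, Real.log (ℓ l (extCfg r x₀ x l)) ∂Q)
      ≥ -Real.log Z := by
  classical
  set cfgF : ({v : V // v ≠ r} → Fin d → ℝ) → ℝ := fun x => prodTrans r pa x₀ p x * prodLik r pa x₀ ℓ x with hcfgF
  set g : ({v : V // v ≠ r} → Fin d → ℝ) → ℝ := prodTrans r pa x₀ q with hgdef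
  -- measurability of extension
  have hext : ∀ w : V, Measurable fun x : {v : V // v ≠ r} → Fin d → ℝ => extCfg r x₀ x w := by
    intro w
    unfold extCfg
    by_cases h : w = r
    · simp only [h, dif_pos]; exact measurable_const
    · simp only [h, dif_neg, not_false_iff]; exact measurable_pi_apply _
  have hterm_m : ∀ v : {v : V // v ≠ r},
      Measurable fun x : {v : V // v ≠ r} → Fin d → ℝ => (x v, extCfg r x₀ x (pa v.1)) :=
    fun v => (measurable_pi_apply v).prodMk (hext (pa v.1))
  have hgm : Measurable g := by
    simp only [hgdef, prodTrans]
    exact Finset.measurable_prod _ fun v _ => (hqm v.1 v.2).comp (hterm_m v)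
  have hfm : Measurable cfgF := by
    simp only [hcfgF, prodTrans, prodLik]
    exact (Finset.measurable_prod _ fun v _ => (hpm v.1 v.2).comp (hterm_m v)).mul
      (Finset.measurable_prod _ fun l hl => (hℓm l hl).comp (hext l))
  -- positivity
  have hgpos : ∀ x, 0 < g x := fun x => Finset.prod_pos fun v _ => hqpos v.1 v.2 _
  have hfpos : ∀ x, 0 < cfgF x := fun x =>
    mul_pos (Finset.prod_pos fun v _ => hppos v.1 v.2 _)
      (Finset.prod_pos fun l hl => hℓpos l hl _)
  -- rewrite Q integrals as volume integrals with density g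
  have hgnn : Measurable fun x => (g x).toNNReal := hgm.real_toNNReal
  have hQd : Q = volume.withDensity fun x => ((g x).toNNReal : ENNReal) := by
    rw [hQ]; rfl
  have hQint : ∀ h : ({v : V // v ≠ r} → Fin d → ℝ) → ℝ,
      ∫ x, h x ∂Q = ∫ x, g x * h x := by
    intro h
    rw [hQd, integral_withDensity_eq_integral_smul hgnn]
    refine integral_congr_ae (Filter.Eventually.of_forall fun x => ?_)
    simp [NNReal.smul_def, Real.coe_toNNReal _ (hgpos x).le]
  -- the ratio and its integral
  have hratio_int : Integrable (fun x => cfgF x / g x) Q := by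
    rw [hQd, integrable_withDensity_iff_integrable_smul hgnn]
    refine hZfin.congr (Filter.Eventually.of_forall fun x => ?_)
    simp [NNReal.smul_def, Real.coe_toNNReal _ (hgpos x).le,
      mul_div_cancel₀ _ (hgpos x).ne']
  have hratioZ : ∫ x, cfgF x / g x ∂Q = Z := by
    rw [hQint, hZdef]
    refine integral_congr_ae (Filter.Eventually.of_forall fun x => ?_)
    show g x * (cfgF x / g x) = cfgF x
    rw [mul_div_cancel₀ _ (hgpos x).ne']
  -- pointwise identity
  have hkey : ∀ x : {v : V // v ≠ r} → Fin d → ℝ,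
      (∑ v : {v : V // v ≠ r}, Real.log
        (q v.1 (x v, extCfg r x₀ x (pa v.1)) / p v.1 (x v, extCfg r x₀ x (pa v.1))))
      - (∑ l ∈ treeLeaves r pa, Real.log (ℓ l (extCfg r x₀ x l)))
      = - Real.log (cfgF x / g x) := by
    intro x
    rw [Real.log_div (hfpos x).ne' (hgpos x).ne']
    simp only [hcfgF, hgdef, prodTrans, prodLik]
    rw [Real.log_mul (Finset.prod_pos fun v _ => hppos v.1 v.2 _).ne'
        (Finset.prod_pos fun l hl => hℓpos l hl _).ne',
      Real.log_prod (fun v _ => (hppos v.1 v.2 _).ne'),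
      Real.log_prod (fun l hl => (hℓpos l hl _).ne'),
      Real.log_prod (fun v _ => (hqpos v.1 v.2 _).ne')]
    rw [Finset.sum_congr rfl (fun v _ => Real.log_div (hqpos v.1 v.2 _).ne' (hppos v.1 v.2 _).ne')]
    rw [Finset.sum_sub_distrib]
    ring
  -- integrability of log ratio
  have hlog_int : Integrable (fun x => Real.log (cfgF x / g x)) Q := by
    have h1 : Integrable (fun x => (∑ l ∈ treeLeaves r pa, Real.log (ℓ l (extCfg r x₀ x l)))
        - ∑ v : {v : V // v ≠ r}, Real.log
          (q v.1 (x v, extCfg r x₀ x (pa v.1)) / p v.1 (x v, extCfg r x₀ x (pa v.1)))) Q :=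
      (integrable_finset_sum _ fun l hl => hlogℓ l hl).sub
        (integrable_finset_sum _ fun v _ => hlogpq v)
    refine h1.congr (Filter.Eventually.of_forall fun x => ?_)
    have := hkey x
    linarith
  -- Jensen with exp
  have hJ : Real.exp (∫ x, Real.log (cfgF x / g x) ∂Q) ≤ ∫ x, cfgF x / g x ∂Q := by
    have hcomp : Integrable (Real.exp ∘ fun x => Real.log (cfgF x / g x)) Q := by
      refine hratio_int.congr (Filter.Eventually.of_forall fun x => ?_)
      simp [Function.comp, Real.exp_log (div_pos (hfpos x) (hgpos x))]
    have := convexOn_exp.map_integral_le (μ := Q)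
      Real.continuous_exp.continuousOn isClosed_univ
      (Filter.Eventually.of_forall fun x => Set.mem_univ _) hlog_int hcomp
    refine this.trans_eq ?_
    refine integral_congr_ae (Filter.Eventually.of_forall fun x => ?_)
    exact Real.exp_log (div_pos (hfpos x) (hgpos x))
  have hI : ∫ x, Real.log (cfgF x / g x) ∂Q ≤ Real.log Z := by
    rw [Real.le_log_iff_exp_le hZpos]
    exact hJ.trans_eq hratioZ
  -- assemble
  have hsum : (∑ v : {v : V // v ≠ r}, ∫ x, Real.log
        (q v.1 (x v, extCfg r x₀ x (pa v.1)) / p v.1 (x v, extCfg r x₀ x (pa v.1))) ∂Q)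
      - (∑ l ∈ treeLeaves r pa, ∫ x, Real.log (ℓ l (extCfg r x₀ x l)) ∂Q)
      = - ∫ x, Real.log (cfgF x / g x) ∂Q := by
    rw [← integral_finset_sum _ fun v _ => hlogpq v,
      ← integral_finset_sum _ fun l hl => hlogℓ l hl,
      ← integral_sub (integrable_finset_sum _ fun v _ => hlogpq v)
        (integrable_finset_sum _ fun l hl => hlogℓ l hl), ← integral_neg]
    exact integral_congr_ae (Filter.Eventually.of_forall fun x => by simpa using hkey x)
  rw [hsum]
  linarith

end
end

section
/- Let d ≥ 1 and let π̃, p : ℝᵈ → ℝ be measurable, strictly positive probability densities with respect to Lebesgue measure, defining probability measures μ̃ = volume.withDensity π̃ and P = volume.withDensity p on ℝᵈ. Let F : ℝᵈ → ℝᵈ be a bijection that is continuously differentiable with continuously differentiable inverse and with det DF(x̃) ≠ 0 for all x̃, and let Q = F_#μ̃ be the pushforward of μ̃ under F. If the function x̃ ↦ log π̃(x̃) − log|det DF(x̃)| − log p(F(x̃)) is μ̃-integrable, then KL(Q ‖ P) = ∫ (log π̃(x̃) − log|det DF(x̃)| − log p(F(x̃))) dμ̃(x̃). -/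
open MeasureTheory

noncomputable section

theorem stmt2 {d : ℕ} (hd : 1 ≤ d)
    -- densities
    (πt p : (Fin d → ℝ) → ℝ)
    (hπm : Measurable πt) (hpm : Measurable p)
    (hπpos : ∀ x, 0 < πt x) (hppos : ∀ x, 0 < p x)
    (hπ1 : (∫ x, πt x) = 1) (hp1 : (∫ x, p x) = 1)
    -- the flow: a bijection, C¹ with C¹ inverse and nonvanishing Jacobian determinant
    (F : (Fin d → ℝ) ≃ (Fin d → ℝ))
    (hF : ContDiff ℝ 1 F) (hFinv : ContDiff ℝ 1 F.symm)
    (hdet : ∀ x, (fderiv ℝ F x).det ≠ 0)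
    -- measures
    (μt P Q : Measure (Fin d → ℝ))
    (hμt : μt = volume.withDensity fun x => ENNReal.ofReal (πt x))
    (hP : P = volume.withDensity fun x => ENNReal.ofReal (p x))
    (hQ : Q = Measure.map F μt)
    -- integrability
    (hint : Integrable
      (fun x => Real.log (πt x) - Real.log |(fderiv ℝ F x).det| - Real.log (p (F x))) μt) :
    klDivergence Q P =
      ∫ x, (Real.log (πt x) - Real.log |(fderiv ℝ F x).det| - Real.log (p (F x))) ∂μt := by
  have hFc : Continuous F := hF.continuous
  have hFsc : Continuous F.symm := hFinv.continuous
  -- determinant of the derivative of the inverse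
  have hdet_symm : ∀ x, (fderiv ℝ F.symm (F x)).det = ((fderiv ℝ F x).det)⁻¹ := by
    intro x
    have hcomp : fderiv ℝ (F.symm ∘ F) x = (fderiv ℝ F.symm (F x)).comp (fderiv ℝ F x) :=
      fderiv_comp x (hFinv.differentiable one_ne_zero _) (hF.differentiable one_ne_zero x)
    have hid : (F.symm ∘ F : (Fin d → ℝ) → (Fin d → ℝ)) = id :=
      funext fun y => F.symm_apply_apply y
    rw [hid, fderiv_id] at hcomp
    have h := congrArg ContinuousLinearMap.det hcomp
    simp only [ContinuousLinearMap.det, ContinuousLinearMap.coe_comp, LinearMap.det_comp,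
      ContinuousLinearMap.coe_id, LinearMap.det_id] at h
    exact eq_inv_of_mul_eq_one_left (by
      simp only [ContinuousLinearMap.det]; rw [← LinearMap.det_comp]; exact h.symm)
  -- the density of Q
  set q : (Fin d → ℝ) → ENNReal :=
    fun y => ENNReal.ofReal |(fderiv ℝ F.symm y).det| * ENNReal.ofReal (πt (F.symm y)) with hq_def
  have hq_meas : Measurable q := by
    refine Measurable.mul (f := fun y => ENNReal.ofReal |(fderiv ℝ F.symm y).det|)
      (g := fun y => ENNReal.ofReal (πt (F.symm y))) ?_ ?_
    · have : Continuous fun y => |(fderiv ℝ F.symm y).det| :=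
        (ContinuousLinearMap.continuous_det.comp (hFinv.continuous_fderiv one_ne_zero)).abs
      exact ENNReal.measurable_ofReal.comp this.measurable
    · exact ENNReal.measurable_ofReal.comp (hπm.comp hFsc.measurable)
  have hQd : Q = volume.withDensity q := by
    ext s hs
    rw [hQ, hμt, Measure.map_apply hFc.measurable hs,
      withDensity_apply _ (hs.preimage hFc.measurable), withDensity_apply _ hs]
    have himg : F ⁻¹' s = F.symm '' s := by
      ext y; simp [Equiv.eq_symm_apply, eq_comm]
    rw [himg]
    rw [lintegral_image_eq_lintegral_abs_det_fderiv_mul volume hs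
      (fun x _ => ((hFinv.differentiable one_ne_zero x).hasFDerivAt).hasFDerivWithinAt)
      (F.symm.injective.injOn) (fun y => ENNReal.ofReal (πt y))]
  -- probability measures
  have hπint : Integrable πt := by
    by_contra h; rw [integral_undef h] at hπ1; exact one_ne_zero hπ1.symm
  have hμt_prob : IsProbabilityMeasure μt := by
    constructor
    rw [hμt, withDensity_apply _ MeasurableSet.univ, Measure.restrict_univ,
      ← ofReal_integral_eq_lintegral_ofReal hπint
        (Filter.Eventually.of_forall fun x => (hπpos x).le), hπ1, ENNReal.ofReal_one]
  have hQ_prob : IsProbabilityMeasure Q := by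
    rw [hQ]; exact Measure.isProbabilityMeasure_map hFc.measurable.aemeasurable
  have hQv : Q ≪ (volume : Measure (Fin d → ℝ)) := by
    rw [hQd]; exact withDensity_absolutelyContinuous _ _
  -- Radon-Nikodym derivative
  have hrn : Q.rnDeriv P =ᵐ[volume] fun y => (ENNReal.ofReal (p y))⁻¹ * q y := by
    have h1 : Q.rnDeriv P =ᵐ[volume] fun y => (ENNReal.ofReal (p y))⁻¹ * Q.rnDeriv volume y := by
      rw [hP]
      exact Measure.rnDeriv_withDensity_right Q volume
        (ENNReal.measurable_ofReal.comp hpm).aemeasurable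
        (Filter.Eventually.of_forall fun x => by
          simp [ENNReal.ofReal_eq_zero, not_le, hppos x])
        (Filter.Eventually.of_forall fun x => ENNReal.ofReal_ne_top)
    have h2 : Q.rnDeriv volume =ᵐ[volume] q := by
      rw [hQd]; exact Measure.rnDeriv_withDensity volume hq_meas
    filter_upwards [h1, h2] with y hy1 hy2
    rw [hy1, hy2]
  have hrnQ : ∀ᵐ y ∂Q, Real.log (Q.rnDeriv P y).toReal =
      Real.log ((ENNReal.ofReal (p y))⁻¹ * q y).toReal := by
    filter_upwards [hQv.ae_le hrn] with y hy
    rw [hy]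
  -- change variables in the integral
  rw [klDivergence, integral_congr_ae hrnQ]
  have : Measure.map F μt =
      Measure.map ((Homeomorph.mk F hFc hFsc).toMeasurableEquiv) μt := rfl
  rw [hQ, this, MeasureTheory.integral_map_equiv]
  apply integral_congr_ae
  apply Filter.Eventually.of_forall
  intro x
  show Real.log ((ENNReal.ofReal (p (F x)))⁻¹ * q (F x)).toReal = _
  have hqx : q (F x) = ENNReal.ofReal |(fderiv ℝ F x).det|⁻¹ * ENNReal.ofReal (πt x) := by
    rw [hq_def]
    simp only [F.symm_apply_apply, hdet_symm x, abs_inv]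
  rw [hqx, ENNReal.toReal_mul, ENNReal.toReal_mul, ENNReal.toReal_inv,
    ENNReal.toReal_ofReal (hppos _).le, ENNReal.toReal_ofReal (inv_nonneg.mpr (abs_nonneg _)),
    ENNReal.toReal_ofReal (hπpos _).le]
  have hp0 : p (F x) ≠ 0 := (hppos _).ne'
  have hd0 : |(fderiv ℝ F x).det| ≠ 0 := abs_ne_zero.mpr (hdet x)
  have hπ0 : πt x ≠ 0 := (hπpos x).ne'
  rw [Real.log_mul (by positivity) (by positivity), Real.log_mul (by positivity) (by positivity),
    Real.log_inv, Real.log_inv]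
  ring

end
end

section
/- Let (V, r, pa) be a finite rooted tree with non-root vertices V⁺, let d ≥ 1, and fix x₀ ∈ ℝᵈ. For each v ∈ V⁺ let p_v, q_v : ℝᵈ × ℝᵈ → ℝ be measurable and strictly positive, and suppose the functions x ↦ ∏_{v∈V⁺} p_v(x_v, x_{pa(v)}) and x ↦ ∏_{v∈V⁺} q_v(x_v, x_{pa(v)}) (with the convention x_r := x₀) are probability densities with respect to the product Lebesgue measure on (ℝᵈ)^{V⁺}, defining probability measures P and Q respectively. If for each v ∈ V⁺ the function x ↦ log(q_v(x_v, x_{pa(v)})/p_v(x_v, x_{pa(v)})) is Q-integrable, then Q ≪ P and KL(Q ‖ P) = Σ_{v∈V⁺} ∫ log( q_v(x_v, x_{pa(v)}) / p_v(x_v, x_{pa(v)}) ) dQ(x). -/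
open MeasureTheory Finset

noncomputable section

lemma extCfg_measurable {V : Type*} [DecidableEq V] (r : V) {d : ℕ} (x₀ : Fin d → ℝ) (w : V) :
    Measurable fun x : {v : V // v ≠ r} → Fin d → ℝ => extCfg r x₀ x w := by
  unfold extCfg
  split
  · exact measurable_const
  · exact measurable_pi_apply _

lemma prodTrans_measurable {V : Type*} [Fintype V] [DecidableEq V] (r : V) (pa : V → V) {d : ℕ}
    (x₀ : Fin d → ℝ) (p : V → (Fin d → ℝ) × (Fin d → ℝ) → ℝ)
    (hpm : ∀ v : V, v ≠ r → Measurable (p v)) :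
    Measurable (prodTrans r pa x₀ p) := by
  unfold prodTrans
  refine Finset.measurable_prod _ fun v _ => ?_
  exact (hpm v.1 v.2).comp ((measurable_pi_apply v).prodMk (extCfg_measurable r x₀ _))

lemma prodTrans_pos {V : Type*} [Fintype V] [DecidableEq V] (r : V) (pa : V → V) {d : ℕ}
    (x₀ : Fin d → ℝ) (p : V → (Fin d → ℝ) × (Fin d → ℝ) → ℝ)
    (hppos : ∀ v : V, v ≠ r → ∀ y, 0 < p v y) (x : {v : V // v ≠ r} → Fin d → ℝ) :
    0 < prodTrans r pa x₀ p x :=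
  Finset.prod_pos fun v _ => hppos v.1 v.2 _

theorem stmt5 {V : Type*} [Fintype V] [DecidableEq V]
    -- rooted tree
    (r : V) (pa : V → V) (hroot : pa r = r) (hreach : ∀ v : V, ∃ n : ℕ, pa^[n] v = r)
    -- dimension and root state
    {d : ℕ} (hd : 1 ≤ d) (x₀ : Fin d → ℝ)
    -- edge-wise factors
    (p q : V → (Fin d → ℝ) × (Fin d → ℝ) → ℝ)
    (hpm : ∀ v : V, v ≠ r → Measurable (p v)) (hqm : ∀ v : V, v ≠ r → Measurable (q v))
    (hppos : ∀ v : V, v ≠ r → ∀ y, 0 < p v y) (hqpos : ∀ v : V, v ≠ r → ∀ y, 0 < q v y)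
    -- the products are probability densities w.r.t. the product Lebesgue measure
    (hp1 : (∫ x, prodTrans r pa x₀ p x) = 1)
    (hq1 : (∫ x, prodTrans r pa x₀ q x) = 1)
    -- the measures they define
    (P Q : Measure ({v : V // v ≠ r} → Fin d → ℝ))
    (hP : P = volume.withDensity fun x => ENNReal.ofReal (prodTrans r pa x₀ p x))
    (hQ : Q = volume.withDensity fun x => ENNReal.ofReal (prodTrans r pa x₀ q x))
    -- integrability of the log ratios
    (hlogpq : ∀ v : {v : V // v ≠ r},
      Integrable (fun x => Real.log
        (q v.1 (x v, extCfg r x₀ x (pa v.1)) / p v.1 (x v, extCfg r x₀ x (pa v.1)))) Q) :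
    Q ≪ P ∧
      klDivergence Q P =
        ∑ v : {v : V // v ≠ r}, ∫ x, Real.log
          (q v.1 (x v, extCfg r x₀ x (pa v.1)) / p v.1 (x v, extCfg r x₀ x (pa v.1))) ∂Q := by
  set f : ({v : V // v ≠ r} → Fin d → ℝ) → ℝ := prodTrans r pa x₀ p with hf
  set g : ({v : V // v ≠ r} → Fin d → ℝ) → ℝ := prodTrans r pa x₀ q with hg
  have hfm : Measurable f := prodTrans_measurable r pa x₀ p hpm
  have hgm : Measurable g := prodTrans_measurable r pa x₀ q hqm
  have hfpos : ∀ x, 0 < f x := prodTrans_pos r pa x₀ p hppos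
  have hgpos : ∀ x, 0 < g x := prodTrans_pos r pa x₀ q hqpos
  have hfEm : Measurable fun x => ENNReal.ofReal (f x) := hfm.ennreal_ofReal
  have hfE_ne : ∀ x, ENNReal.ofReal (f x) ≠ 0 := fun x => by
    simp [ENNReal.ofReal_eq_zero, not_le, hfpos x]
  -- the density ratio
  set h : ({v : V // v ≠ r} → Fin d → ℝ) → ENNReal :=
    fun x => ENNReal.ofReal (g x) * (ENNReal.ofReal (f x))⁻¹ with hh
  have hhm : Measurable h := hgm.ennreal_ofReal.mul hfEm.inv
  -- Q = P.withDensity h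
  have hQP : Q = P.withDensity h := by
    rw [hP, ← withDensity_mul _ hfEm hhm, hQ]
    congr 1
    funext x
    simp only [Pi.mul_apply, hh]
    rw [← mul_assoc, mul_comm (ENNReal.ofReal (f x)), mul_assoc,
      ENNReal.mul_inv_cancel (hfE_ne x) ENNReal.ofReal_ne_top, mul_one]
  -- absolute continuity
  have hvleP : (volume : Measure ({v : V // v ≠ r} → Fin d → ℝ)) ≪ P := by
    rw [hP]
    exact withDensity_absolutelyContinuous' hfEm.aemeasurable
      (Filter.Eventually.of_forall fun x => hfE_ne x)
  have hQac : Q ≪ P := by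
    rw [hQ]
    exact (withDensity_absolutelyContinuous _ _).trans hvleP
  refine ⟨hQac, ?_⟩
  -- P is a probability measure, hence sigma-finite
  have hfint : Integrable f := integrable_of_integral_eq_one hp1
  have hPprob : IsProbabilityMeasure P := by
    constructor
    rw [hP, withDensity_apply _ MeasurableSet.univ, Measure.restrict_univ,
      ← ofReal_integral_eq_lintegral_ofReal hfint
        (Filter.Eventually.of_forall fun x => (hfpos x).le),
      hp1, ENNReal.ofReal_one]
  have hrn : Q.rnDeriv P =ᵐ[P] h := by
    rw [hQP]; exact Measure.rnDeriv_withDensity P hhm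
  have hrnQ : Q.rnDeriv P =ᵐ[Q] h := hQac.ae_eq hrn
  -- pointwise identity for the integrand
  have hpt : ∀ x, Real.log (h x).toReal =
      ∑ v : {v : V // v ≠ r}, Real.log
        (q v.1 (x v, extCfg r x₀ x (pa v.1)) / p v.1 (x v, extCfg r x₀ x (pa v.1))) := by
    intro x
    have : (h x).toReal = g x / f x := by
      rw [hh, ENNReal.toReal_mul, ENNReal.toReal_inv, ENNReal.toReal_ofReal (hgpos x).le,
        ENNReal.toReal_ofReal (hfpos x).le, div_eq_mul_inv]
    rw [this, hg, hf, prodTrans, prodTrans, ← Finset.prod_div_distrib]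
    exact Real.log_prod fun v _ =>
      (div_pos (hqpos v.1 v.2 _) (hppos v.1 v.2 _)).ne'
  calc klDivergence Q P = ∫ x, Real.log (h x).toReal ∂Q := by
        refine integral_congr_ae ?_
        filter_upwards [hrnQ] with x hx
        rw [hx]
    _ = ∫ x, ∑ v : {v : V // v ≠ r}, Real.log
          (q v.1 (x v, extCfg r x₀ x (pa v.1)) / p v.1 (x v, extCfg r x₀ x (pa v.1))) ∂Q := by
        simp only [hpt]
    _ = _ := integral_finset_sum _ fun v _ => hlogpq v
end
end

section
/- Let (V, r, pa) be a finite rooted tree with non-root vertices V⁺ and leaves L, let d ≥ 1, and fix x₀ ∈ ℝᵈ. For each v ∈ V⁺ let p_v : ℝᵈ × ℝᵈ → [0,∞] be a measurable function, and for each leaf l ∈ L let ℓ_l : ℝᵈ → [0,∞] be measurable. Define h_v : ℝᵈ → [0,∞] for all v ∈ V by recursion on the height of the subtree rooted at v: h_l(x) := ℓ_l(x) for l ∈ L, and h_v(x) := ∏_{c ∈ ch(v)} ∫ h_c(x') · p_c(x', x) dx' for v ∉ L. Then the backward recursion computes the evidence: h_r(x₀) = ∫_{(ℝᵈ)^{V⁺}}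 ∏_{v∈V⁺} p_v(x_v, x_{pa(v)}) · ∏_{l∈L} ℓ_l(x_l) dx, where x_r := x₀ and all integrals are Lebesgue integrals of [0,∞]-valued functions (Tonelli applies, with no integrability hypotheses needed). -/
open MeasureTheory Finset ENNReal
open Function

noncomputable section

set_option linter.unusedSectionVars false
set_option linter.unusedVariables false
set_option maxHeartbeats 1000000

namespace TreeAux


variable {V : Type*} [Fintype V] [DecidableEq V]

open scoped Classical in
def descFin (r : V) (pa : V → V) (v : V) : Finset V :=
  Finset.univ.filter fun w => w ≠ r ∧ ∃ n, 0 < n ∧ pa^[n] w = v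

lemma mem_descFin {r v w : V} {pa : V → V} :
    w ∈ descFin r pa v ↔ w ≠ r ∧ ∃ n, 0 < n ∧ pa^[n] w = v := by
  classical simp [descFin]

variable {r : V} {pa : V → V}

omit [Fintype V] [DecidableEq V] in
lemma acyc (hroot : pa r = r) (hreach : ∀ v : V, ∃ n : ℕ, pa^[n] v = r)
    {v : V} {n : ℕ} (hn : 0 < n) (hv : pa^[n] v = v) : v = r := by
  obtain ⟨k, hk⟩ := hreach v
  have h1 : ∀ m, pa^[n * m] v = v := by
    intro m
    induction m with
    | zero => simp
    | succ m ih =>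
      have : n * (m + 1) = n * m + n := by ring
      rw [this, Function.iterate_add_apply, hv, ih]
  have h2 : ∀ j, pa^[k + j] v = r := by
    intro j
    rw [add_comm, Function.iterate_add_apply, hk, Function.iterate_fixed hroot]
  have hle : k ≤ n * (k + 1) := by nlinarith
  have := h1 (k + 1)
  rw [show n * (k + 1) = k + (n * (k + 1) - k) by omega, h2] at this
  exact this.symm

lemma self_not_mem_descFin (hroot : pa r = r) (hreach : ∀ v : V, ∃ n : ℕ, pa^[n] v = r)
    (v : V) : v ∉ descFin r pa v := by
  intro hv
  rw [mem_descFin] at hv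
  obtain ⟨hvr, n, hn, hiter⟩ := hv
  exact hvr (acyc hroot hreach hn hiter)

lemma mem_childSet {v c : V} : c ∈ childSet r pa v ↔ c ≠ r ∧ pa c = v := by
  simp [childSet]

lemma child_mem_descFin {v c : V} (hc : c ∈ childSet r pa v) : c ∈ descFin r pa v := by
  rw [mem_childSet] at hc
  exact mem_descFin.2 ⟨hc.1, 1, one_pos, by simpa using hc.2⟩

lemma descFin_child_subset {v c : V} (hc : c ∈ childSet r pa v) :
    descFin r pa c ⊆ descFin r pa v := by
  rw [mem_childSet] at hc
  intro w hw
  rw [mem_descFin] at hw ⊢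
  obtain ⟨hwr, n, hn, hiter⟩ := hw
  exact ⟨hwr, n + 1, Nat.succ_pos _, by rw [Function.iterate_succ_apply', hiter, hc.2]⟩

lemma descFin_child_ssubset (hroot : pa r = r) (hreach : ∀ v : V, ∃ n : ℕ, pa^[n] v = r)
    {v c : V} (hc : c ∈ childSet r pa v) : descFin r pa c ⊂ descFin r pa v :=
  Finset.ssubset_iff_of_subset (descFin_child_subset hc) |>.2
    ⟨c, child_mem_descFin hc, self_not_mem_descFin hroot hreach c⟩

lemma parent_mem (hroot : pa r = r) {v w : V} (hw : w ∈ descFin r pa v) :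
    pa w ∈ insert v (descFin r pa v) := by
  rw [mem_descFin] at hw
  obtain ⟨hwr, n, hn, hiter⟩ := hw
  obtain ⟨m, rfl⟩ : ∃ m, n = m + 1 := ⟨n - 1, by omega⟩
  rcases Nat.eq_zero_or_pos m with rfl | hm
  · simp only [zero_add, Function.iterate_one] at hiter; simp [hiter]
  · by_cases hpw : pa w = r
    · have hvr : v = r := by
        rw [← hiter, Function.iterate_succ_apply, hpw, Function.iterate_fixed hroot]
      exact Finset.mem_insert.2 (Or.inl (by rw [hpw, hvr]))
    · refine Finset.mem_insert_of_mem (mem_descFin.2 ⟨hpw, m, hm, ?_⟩)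
      rw [← Function.iterate_succ_apply, hiter]

lemma descFin_decomp (hroot : pa r = r) (hreach : ∀ v : V, ∃ n : ℕ, pa^[n] v = r) (v : V) :
    descFin r pa v = (childSet r pa v).biUnion (fun c => insert c (descFin r pa c)) := by
  ext w
  simp only [Finset.mem_biUnion]
  constructor
  · intro hw
    rw [mem_descFin] at hw
    obtain ⟨hwr, hex⟩ := hw
    classical
    have h0 : 0 < Nat.find hex := (Nat.find_spec hex).1
    have hit : pa^[Nat.find hex] w = v := (Nat.find_spec hex).2
    have hkk : Nat.find hex = (Nat.find hex - 1) + 1 := by omega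
    set k := Nat.find hex - 1 with hkdef
    set c := pa^[k] w with hc
    have hpc : pa c = v := by
      rw [hc, ← Function.iterate_succ_apply' pa k w, Nat.succ_eq_add_one, ← hkk, hit]
    have hcr : c ≠ r := by
      intro hceq
      rcases Nat.eq_zero_or_pos k with hk0 | hkpos
      · rw [hk0] at hc; simp at hc; exact hwr (hc.symm ▸ hceq)
      · have hmin : ¬(0 < k ∧ pa^[k] w = v) := Nat.find_min hex (by omega)
        have hvr : v = r := by rw [← hpc, hceq, hroot]
        exact hmin ⟨hkpos, by rw [← hc, hceq, hvr]⟩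
    refine ⟨c, mem_childSet.2 ⟨hcr, hpc⟩, ?_⟩
    rcases Nat.eq_zero_or_pos k with hk0 | hkpos
    · rw [hk0] at hc; simp at hc; rw [hc]; exact Finset.mem_insert_self _ _
    · exact Finset.mem_insert_of_mem (mem_descFin.2 ⟨hwr, k, hkpos, hc.symm⟩)
  · rintro ⟨c, hc, hw⟩
    rcases Finset.mem_insert.1 hw with rfl | hw
    · exact child_mem_descFin hc
    · exact descFin_child_subset hc hw

lemma subtree_disjoint (hroot : pa r = r) (hreach : ∀ v : V, ∃ n : ℕ, pa^[n] v = r)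
    {v c₁ c₂ : V} (h1 : c₁ ∈ childSet r pa v) (h2 : c₂ ∈ childSet r pa v) (hne : c₁ ≠ c₂) :
    Disjoint (insert c₁ (descFin r pa c₁)) (insert c₂ (descFin r pa c₂)) := by
  rw [mem_childSet] at h1 h2
  rw [Finset.disjoint_left]
  intro w hw1 hw2
  have key : ∀ c : V, w ∈ insert c (descFin r pa c) → ∃ n, pa^[n] w = c := by
    intro c hw
    rcases Finset.mem_insert.1 hw with rfl | hw
    · exact ⟨0, rfl⟩
    · obtain ⟨-, n, -, hn⟩ := mem_descFin.1 hw
      exact ⟨n, hn⟩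
  obtain ⟨n₁, hn₁⟩ := key c₁ hw1
  obtain ⟨n₂, hn₂⟩ := key c₂ hw2
  have main : ∀ (a b : V) (m₁ m₂ : ℕ), m₁ ≤ m₂ → a ≠ r → b ≠ r → pa a = v → pa b = v →
      pa^[m₁] w = a → pa^[m₂] w = b → a = b := by
    intro a b m₁ m₂ hle har hbr hpa hpb hma hmb
    have hab : pa^[m₂ - m₁] a = b := by
      rw [← hma, ← Function.iterate_add_apply, show m₂ - m₁ + m₁ = m₂ by omega, hmb]
    rcases Nat.eq_zero_or_pos (m₂ - m₁) with h0 | h0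
    · rw [h0] at hab; simpa using hab
    · exfalso
      have hv : pa^[m₂ - m₁] v = v := by
        have h3 := congrArg pa hab
        rw [← Function.iterate_succ_apply' pa (m₂ - m₁) a, hpb,
          Function.iterate_succ_apply, hpa] at h3
        exact h3
      have hvr : v = r := acyc hroot hreach h0 hv
      have : pa^[m₂ - m₁] a = r := by
        rw [show m₂ - m₁ = (m₂ - m₁ - 1) + 1 by omega, Function.iterate_succ_apply, hpa, hvr,
          Function.iterate_fixed hroot]
      rw [hab] at this
      exact hbr this
  rcases le_total n₁ n₂ with hle | hle
  · exact hne (main c₁ c₂ n₁ n₂ hle h1.1 h2.1 h1.2 h2.2 hn₁ hn₂)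
  · exact hne ((main c₂ c₁ n₂ n₁ hle h2.1 h1.1 h2.2 h1.2 hn₂ hn₁).symm)

lemma descFin_root (hroot : pa r = r) (hreach : ∀ v : V, ∃ n : ℕ, pa^[n] v = r) :
    descFin r pa r = Finset.univ.filter (· ≠ r) := by
  ext w
  simp only [mem_descFin, Finset.mem_filter, Finset.mem_univ, true_and]
  constructor
  · exact fun h => h.1
  · intro hw
    obtain ⟨n, hn⟩ := hreach w
    refine ⟨hw, n, ?_, hn⟩
    rcases Nat.eq_zero_or_pos n with rfl | h
    · simp only [Function.iterate_zero, id_eq] at hn; exact absurd hn hw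
    · exact h

lemma descFin_leaf (hroot : pa r = r) (hreach : ∀ v : V, ∃ n : ℕ, pa^[n] v = r)
    {v : V} (hv : v ∈ treeLeaves r pa) : descFin r pa v = ∅ := by
  have hch : childSet r pa v = ∅ := by simpa [treeLeaves] using hv
  rw [descFin_decomp hroot hreach, hch]
  simp

lemma not_leaf_children_nonempty (hv : v ∉ treeLeaves r pa) : childSet r pa v ≠ ∅ := by
  simpa [treeLeaves] using hv



variable {V : Type*} [DecidableEq V] {E : Type*} [MeasurableSpace E]
  (μ : V → Measure E) [∀ i, SigmaFinite (μ i)]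

/-- `f` depends only on coordinates in `s`. -/
def DOn (f : (V → E) → ℝ≥0∞) (s : Finset V) : Prop :=
  ∀ z z' : V → E, (∀ i ∈ s, z i = z' i) → f z = f z'

variable {f g : (V → E) → ℝ≥0∞} {s t : Finset V}

omit [MeasurableSpace E] in
lemma DOn.mono (hf : DOn f s) (hst : s ⊆ t) : DOn f t :=
  fun z z' h => hf z z' fun i hi => h i (hst hi)

omit [MeasurableSpace E] in
lemma DOn_prod {ι : Type*} {S : Finset ι} {F : ι → (V → E) → ℝ≥0∞} {T : ι → Finset V}
    (h : ∀ c ∈ S, DOn (F c) (T c)) :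
    DOn (fun z => ∏ c ∈ S, F c z) (S.biUnion T) := by
  intro z z' hzz
  refine Finset.prod_congr rfl fun c hc => h c hc z z' fun i hi => hzz i ?_
  exact Finset.mem_biUnion.2 ⟨c, hc, hi⟩

lemma lmarginal_mul_left (hf : DOn f s) (hst : Disjoint s t) (hg : Measurable g)
    (z : V → E) :
    (∫⋯∫⁻_t, (fun w => f w * g w) ∂μ) z = f z * (∫⋯∫⁻_t, g ∂μ) z := by
  have key : ∀ y : (i : t) → E, f (updateFinset z t y) = f z := by
    intro y
    refine hf _ _ fun i hi => ?_
    have hit : i ∉ t := Finset.disjoint_left.1 hst hi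
    simp [updateFinset, hit]
  simp only [lmarginal]
  simp_rw [key]
  exact lintegral_const_mul _ (hg.comp measurable_updateFinset)

lemma lmarginal_mul_right (hf : DOn f s) (hst : Disjoint s t) (hg : Measurable g)
    (z : V → E) :
    (∫⋯∫⁻_t, (fun w => g w * f w) ∂μ) z = (∫⋯∫⁻_t, g ∂μ) z * f z := by
  simp_rw [mul_comm (g _)]
  rw [lmarginal_mul_left μ hf hst hg z, mul_comm]

omit [∀ i, SigmaFinite (μ i)] in
lemma DOn.lmarginal (hf : DOn f s) : DOn (∫⋯∫⁻_t, f ∂μ) (s \ t) := by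
  intro z z' h
  simp only [MeasureTheory.lmarginal]
  refine lintegral_congr fun y => hf _ _ fun i hi => ?_
  by_cases hit : i ∈ t
  · simp [updateFinset, hit]
  · simp [updateFinset, hit, h i (Finset.mem_sdiff.2 ⟨hi, hit⟩)]

/-- Product of marginals over disjoint blocks equals the marginal of the product. -/
lemma lmarginal_prod {ι : Type*} [DecidableEq ι] {v : V} (S : Finset ι)
    (T : ι → Finset V) (F : ι → (V → E) → ℝ≥0∞)
    (hmeas : ∀ c ∈ S, Measurable (F c))
    (hdep : ∀ c ∈ S, DOn (F c) (insert v (T c)))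
    (hdisj : ∀ c ∈ S, ∀ c' ∈ S, c ≠ c' → Disjoint (T c) (T c'))
    (hv : ∀ c ∈ S, v ∉ T c) (z : V → E) :
    (∫⋯∫⁻_(S.biUnion T), (fun w => ∏ c ∈ S, F c w) ∂μ) z
      = ∏ c ∈ S, (∫⋯∫⁻_(T c), F c ∂μ) z := by
  classical
  induction S using Finset.induction_on generalizing z with
  | empty => simp
  | @insert a S ha ih =>
    set U := S.biUnion T with hU
    set P := fun w => ∏ c ∈ S, F c w with hP
    have haS : ∀ c ∈ S, a ≠ c := fun c hc hac => ha (hac ▸ hc)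
    have hdisjU : Disjoint (T a) U := by
      rw [hU, Finset.disjoint_biUnion_right]
      exact fun c hc => hdisj a (Finset.mem_insert_self a S) c
        (Finset.mem_insert_of_mem hc) (haS c hc)
    have hvU : v ∉ U := by
      rw [hU]
      simp only [Finset.mem_biUnion, not_exists]
      rintro c ⟨hc, hm⟩
      exact hv c (Finset.mem_insert_of_mem hc) hm
    have hmeasP : Measurable P :=
      Finset.measurable_prod S fun c hc => hmeas c (Finset.mem_insert_of_mem hc)
    have hmeasFa : Measurable (F a) := hmeas a (Finset.mem_insert_self a S)
    have hmeasProd : Measurable fun w => F a w * P w := hmeasFa.mul hmeasP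
    have hdepP : DOn P (insert v U) := by
      refine (DOn_prod fun c hc => hdep c (Finset.mem_insert_of_mem hc)).mono ?_
      intro i hi
      rcases Finset.mem_biUnion.1 hi with ⟨c, hc, hic⟩
      rcases Finset.mem_insert.1 hic with rfl | hic
      · exact Finset.mem_insert_self _ _
      · exact Finset.mem_insert_of_mem (Finset.mem_biUnion.2 ⟨c, hc, hic⟩)
    set G := (∫⋯∫⁻_U, P ∂μ) with hG
    have hdepG : DOn G ((insert v U) \ U) := hdepP.lmarginal μ
    have hdisjG : Disjoint ((insert v U) \ U) (T a) := by
      rw [Finset.disjoint_left]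
      intro x hx hxT
      rcases Finset.mem_sdiff.1 hx with ⟨hx1, hx2⟩
      rcases Finset.mem_insert.1 hx1 with rfl | hx1
      · exact hv a (Finset.mem_insert_self a S) hxT
      · exact hx2 hx1
    have step1 : (∫⋯∫⁻_((insert a S).biUnion T), (fun w => ∏ c ∈ insert a S, F c w) ∂μ) z
        = (∫⋯∫⁻_(T a), (∫⋯∫⁻_U, (fun w => F a w * P w) ∂μ) ∂μ) z := by
      rw [Finset.biUnion_insert]
      have : (fun w => ∏ c ∈ insert a S, F c w) = fun w => F a w * P w := by
        funext w; rw [Finset.prod_insert ha]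
      rw [this, lmarginal_union μ _ hmeasProd hdisjU]
    have step2 : (∫⋯∫⁻_U, (fun w => F a w * P w) ∂μ) = fun w => F a w * G w := by
      funext w
      exact lmarginal_mul_left μ (hdep a (Finset.mem_insert_self a S))
        (by rw [Finset.disjoint_insert_left]; exact ⟨hvU, hdisjU⟩) hmeasP w
    have step3 : (∫⋯∫⁻_(T a), (fun w => F a w * G w) ∂μ) z
        = (∫⋯∫⁻_(T a), F a ∂μ) z * G z := by
      have := lmarginal_mul_right μ (f := G) (s := (insert v U) \ U) (g := F a)
        hdepG hdisjG.symm.symm hmeasFa z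
      simpa using this
    rw [step1, step2, step3, Finset.prod_insert ha]
    congr 1
    exact ih (fun c hc => hmeas c (Finset.mem_insert_of_mem hc))
        (fun c hc => hdep c (Finset.mem_insert_of_mem hc))
        (fun c hc c' hc' h => hdisj c (Finset.mem_insert_of_mem hc) c'
          (Finset.mem_insert_of_mem hc') h)
        (fun c hc => hv c (Finset.mem_insert_of_mem hc)) z



section Hfun
variable {V : Type*} [Fintype V] [DecidableEq V] {E : Type*} [MeasurableSpace E]

/-- The full integrand for the closed subtree at `v`. -/
def Hfun (r : V) (pa : V → V) (p : V → E × E → ℝ≥0∞) (ℓ : V → E → ℝ≥0∞) (v : V)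
    (z : V → E) : ℝ≥0∞ :=
  (∏ w ∈ descFin r pa v, p w (z w, z (pa w))) *
    ∏ l ∈ (insert v (descFin r pa v)) ∩ treeLeaves r pa, ℓ l (z l)

variable {r : V} {pa : V → V} {p : V → E × E → ℝ≥0∞} {ℓ : V → E → ℝ≥0∞}

lemma measurable_Hfun (hp : ∀ w, w ≠ r → Measurable (p w))
    (hl : ∀ l ∈ treeLeaves r pa, Measurable (ℓ l)) (v : V) :
    Measurable (Hfun r pa p ℓ v) := by
  refine Measurable.mul ?_ ?_
  · exact Finset.measurable_prod _ fun w hw =>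
      (hp w (mem_descFin.1 hw).1).comp
        ((measurable_pi_apply w).prodMk (measurable_pi_apply (pa w)))
  · exact Finset.measurable_prod _ fun l hl' =>
      (hl l (Finset.mem_of_mem_inter_right hl')).comp (measurable_pi_apply l)

lemma DOn_Hfun (hroot : pa r = r) (v : V) :
    DOn (Hfun r pa p ℓ v) (insert v (descFin r pa v)) := by
  intro z z' hz
  unfold Hfun
  congr 1
  · exact Finset.prod_congr rfl fun w hw => by
      rw [hz w (Finset.mem_insert_of_mem hw), hz (pa w) (parent_mem hroot hw)]
  · exact Finset.prod_congr rfl fun l hl => by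
      rw [hz l (Finset.mem_of_mem_inter_left hl)]

lemma not_mem_subtree (hroot : pa r = r) (hreach : ∀ v : V, ∃ n : ℕ, pa^[n] v = r)
    {v c : V} (hc : c ∈ childSet r pa v) : v ∉ insert c (descFin r pa c) := by
  rw [mem_childSet] at hc
  intro hv
  rcases Finset.mem_insert.1 hv with rfl | hv
  · exact hc.1 (acyc hroot hreach one_pos (by simpa using hc.2))
  · obtain ⟨hvr, m, hm, hit⟩ := mem_descFin.1 hv
    refine hvr (acyc hroot hreach (Nat.succ_pos m) ?_)
    rw [Function.iterate_succ_apply', hit, hc.2]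

lemma child_ne_parent (hroot : pa r = r) (hreach : ∀ v : V, ∃ n : ℕ, pa^[n] v = r)
    {v c : V} (hc : c ∈ childSet r pa v) : c ≠ v := by
  rw [mem_childSet] at hc
  intro hcv
  exact hc.1 (acyc hroot hreach one_pos (by simp [hcv ▸ hc.2, hcv]))

end Hfun

end TreeAux



open TreeAux in
theorem stmt6 {V : Type*} [Fintype V] [DecidableEq V]
    -- rooted tree
    (r : V) (pa : V → V) (hroot : pa r = r) (hreach : ∀ v : V, ∃ n : ℕ, pa^[n] v = r)
    -- dimension and root state
    {d : ℕ} (hd : 1 ≤ d) (x₀ : Fin d → ℝ)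
    -- transition kernels and leaf likelihoods, `[0,∞]`-valued
    (p : V → (Fin d → ℝ) × (Fin d → ℝ) → ℝ≥0∞)
    (hpm : ∀ v : V, v ≠ r → Measurable (p v))
    (ℓ : V → (Fin d → ℝ) → ℝ≥0∞)
    (hℓm : ∀ l ∈ treeLeaves r pa, Measurable (ℓ l))
    -- the backward information filter, defined by the recursion on subtree height
    (h : V → (Fin d → ℝ) → ℝ≥0∞)
    (hleaf : ∀ l ∈ treeLeaves r pa, ∀ x : Fin d → ℝ, h l x = ℓ l x)
    (hfuse : ∀ v : V, v ∉ treeLeaves r pa → ∀ x : Fin d → ℝ,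
      h v x = ∏ c ∈ childSet r pa v, ∫⁻ x', h c x' * p c (x', x)) :
    h r x₀ =
      ∫⁻ x : {v : V // v ≠ r} → Fin d → ℝ,
        (∏ v : {v : V // v ≠ r}, p v.1 (x v, extCfg r x₀ x (pa v.1))) *
          ∏ l ∈ treeLeaves r pa, ℓ l (extCfg r x₀ x l) := by
  have hHmeas : ∀ v, Measurable (Hfun r pa p ℓ v) := fun v => measurable_Hfun hpm hℓm v
  -- the leaf case of the main induction
  have leafcase : ∀ v ∈ treeLeaves r pa, ∀ z : V → (Fin d → ℝ),
      h v (z v) = (∫⋯∫⁻_(descFin r pa v), Hfun r pa p ℓ v ∂fun _ => volume) z := by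
    intro v hv z
    have hDv : descFin r pa v = ∅ := descFin_leaf hroot hreach hv
    rw [hDv, lmarginal_empty, hleaf v hv]
    have hins : insert v (∅ : Finset V) ∩ treeLeaves r pa = {v} := by
      rw [Finset.insert_inter_of_mem hv]
      simp
    unfold Hfun
    rw [hDv, hins]
    simp
  -- main induction on the size of the descendant set
  have claim : ∀ n, ∀ v : V, (descFin r pa v).card ≤ n → ∀ z : V → (Fin d → ℝ),
      h v (z v) = (∫⋯∫⁻_(descFin r pa v), Hfun r pa p ℓ v ∂fun _ => volume) z := by
    intro n
    induction n with
    | zero =>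
      intro v hcard z
      have hDv : descFin r pa v = ∅ := Finset.card_eq_zero.1 (Nat.le_zero.1 hcard)
      have hvleaf : v ∈ treeLeaves r pa := by
        have hch : childSet r pa v = ∅ := by
          by_contra hne
          obtain ⟨c, hc⟩ := Finset.nonempty_iff_ne_empty.2 hne
          exact absurd (child_mem_descFin hc) (by simp [hDv])
        simp [treeLeaves, hch]
      exact leafcase v hvleaf z
    | succ n IH =>
      intro v hcard z
      by_cases hvleaf : v ∈ treeLeaves r pa
      · exact leafcase v hvleaf z
      set C := childSet r pa v with hC
      set T : V → Finset V := fun c => insert c (descFin r pa c) with hT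
      set F : V → (V → (Fin d → ℝ)) → ℝ≥0∞ :=
        fun c w => Hfun r pa p ℓ c w * p c (w c, w (pa c)) with hF
      have hdecomp : descFin r pa v = C.biUnion T := descFin_decomp hroot hreach v
      have hFmeas : ∀ c ∈ C, Measurable (F c) := by
        intro c hc
        have hker : Measurable fun w : V → (Fin d → ℝ) => p c (w c, w (pa c)) :=
          (hpm c (mem_childSet.1 hc).1).comp
            ((measurable_pi_apply c).prodMk (measurable_pi_apply (pa c)))
        exact (hHmeas c).mul hker
      have hFdep : ∀ c ∈ C, DOn (F c) (insert v (T c)) := by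
        intro c hc
        intro w w' hww
        have h1 : Hfun r pa p ℓ c w = Hfun r pa p ℓ c w' :=
          DOn_Hfun hroot c w w' fun i hi => hww i (Finset.mem_insert_of_mem hi)
        have h2 : w c = w' c :=
          hww c (Finset.mem_insert_of_mem (Finset.mem_insert_self c _))
        have h3 : w (pa c) = w' (pa c) := by
          rw [(mem_childSet.1 hc).2]
          exact hww v (Finset.mem_insert_self v _)
        rw [hF]
        simp only
        rw [h1, h2, h3]
      have hTdisj : ∀ c ∈ C, ∀ c' ∈ C, c ≠ c' → Disjoint (T c) (T c') :=
        fun c hc c' hc' hne => subtree_disjoint hroot hreach hc hc' hne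
      have hvT : ∀ c ∈ C, v ∉ T c := fun c hc => not_mem_subtree hroot hreach hc
      -- Step A: the subtree integrand factors over the children
      have stepA : Hfun r pa p ℓ v = fun w => ∏ c ∈ C, F c w := by
        funext w
        unfold Hfun
        have e1 : insert v (descFin r pa v) ∩ treeLeaves r pa
            = descFin r pa v ∩ treeLeaves r pa :=
          Finset.insert_inter_of_notMem hvleaf
        have hdisjT : ((C : Finset V) : Set V).PairwiseDisjoint T := by
          intro a ha b hb hab
          exact hTdisj a ha b hb hab
        have e2 : ∏ w' ∈ descFin r pa v, p w' (w w', w (pa w'))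
            = ∏ c ∈ C, (p c (w c, w (pa c)) *
                ∏ w' ∈ descFin r pa c, p w' (w w', w (pa w'))) := by
          rw [hdecomp, Finset.prod_biUnion hdisjT]
          refine Finset.prod_congr rfl fun c hc => ?_
          rw [hT]
          simp only
          rw [Finset.prod_insert (self_not_mem_descFin hroot hreach c),
            (mem_childSet.1 hc).2]
        have e3 : descFin r pa v ∩ treeLeaves r pa
            = C.biUnion fun c => T c ∩ treeLeaves r pa := by
          rw [hdecomp]
          ext x
          simp only [Finset.mem_inter, Finset.mem_biUnion]
          tauto
        have hdisjT2 : ((C : Finset V) : Set V).PairwiseDisjoint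
            (fun c => T c ∩ treeLeaves r pa) := by
          intro a ha b hb hab
          exact (hTdisj a ha b hb hab).mono Finset.inter_subset_left
            Finset.inter_subset_left
        have e4 : ∏ l ∈ descFin r pa v ∩ treeLeaves r pa, ℓ l (w l)
            = ∏ c ∈ C, ∏ l ∈ T c ∩ treeLeaves r pa, ℓ l (w l) := by
          rw [e3, Finset.prod_biUnion hdisjT2]
        rw [e1, e2, e4, ← Finset.prod_mul_distrib]
        refine Finset.prod_congr rfl fun c hc => ?_
        rw [hF]
        simp only
        unfold Hfun
        ring
      -- Step B: split the marginal into children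
      have stepB : (∫⋯∫⁻_(descFin r pa v), Hfun r pa p ℓ v ∂fun _ => volume) z
          = ∏ c ∈ C, (∫⋯∫⁻_(T c), F c ∂fun _ => volume) z := by
        rw [stepA, hdecomp]
        exact lmarginal_prod _ C T F hFmeas hFdep hTdisj hvT z
      -- Step C: each child factor is the one-dimensional integral
      have stepC : ∀ c ∈ C, (∫⋯∫⁻_(T c), F c ∂fun _ => volume) z
          = ∫⁻ x', h c x' * p c (x', z v) := by
        intro c hc
        have hcr : c ≠ r := (mem_childSet.1 hc).1
        have hcpa : pa c = v := (mem_childSet.1 hc).2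
        have hcv : c ≠ v := child_ne_parent hroot hreach hc
        have hcD : c ∉ descFin r pa c := self_not_mem_descFin hroot hreach c
        have hvD : v ∉ descFin r pa c := fun hmem =>
          not_mem_subtree hroot hreach hc (Finset.mem_insert_of_mem hmem)
        rw [hT]
        simp only
        rw [lmarginal_insert _ (hFmeas c hc) hcD]
        refine lintegral_congr fun x' => ?_
        have hker : DOn (fun w : V → (Fin d → ℝ) => p c (w c, w (pa c))) {c, pa c} := by
          intro w w' hww
          simp only
          rw [hww c (by simp), hww (pa c) (by simp)]
        have hkerdisj : Disjoint ({c, pa c} : Finset V) (descFin r pa c) := by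
          rw [Finset.disjoint_left]
          intro x hx hxD
          rcases Finset.mem_insert.1 hx with rfl | hx
          · exact hcD hxD
          · rw [Finset.mem_singleton.1 hx, hcpa] at hxD
            exact hvD hxD
        have hpull := lmarginal_mul_right
          (fun _ : V => (volume : Measure (Fin d → ℝ)))
          (f := fun w : V → (Fin d → ℝ) => p c (w c, w (pa c)))
          (s := ({c, pa c} : Finset V)) (t := descFin r pa c) (g := Hfun r pa p ℓ c)
          hker hkerdisj (hHmeas c) (Function.update z c x')
        rw [hF]
        simp only
        rw [hpull]
        have hicard : (descFin r pa c).card ≤ n := by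
          have hlt : (descFin r pa c).card < (descFin r pa v).card :=
            Finset.card_lt_card (descFin_child_ssubset hroot hreach hc)
          omega
        have hIH := IH c hicard (Function.update z c x')
        rw [Function.update_self] at hIH
        rw [← hIH, Function.update_self, hcpa,
          Function.update_of_ne (Ne.symm hcv) x' z]
      calc h v (z v) = ∏ c ∈ C, ∫⁻ x', h c x' * p c (x', z v) := hfuse v hvleaf (z v)
        _ = ∏ c ∈ C, (∫⋯∫⁻_(T c), F c ∂fun _ => volume) z :=
            (Finset.prod_congr rfl fun c hc => (stepC c hc).symm)
        _ = (∫⋯∫⁻_(descFin r pa v), Hfun r pa p ℓ v ∂fun _ => volume) z := stepB.symm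
  -- assemble at the root
  have key := claim (descFin r pa r).card r le_rfl (fun _ => x₀)
  set s : Finset V := Finset.univ.filter (· ≠ r) with hs
  have hroot_desc : descFin r pa r = s := by
    rw [hs]; exact descFin_root hroot hreach
  have hmem_s : ∀ w : V, w ∈ s ↔ w ≠ r := fun w => by simp [hs]
  have hrs : r ∉ s := by simp [hmem_s]
  set e : {v : V // v ≠ r} ≃ {v : V // v ∈ s} :=
    Equiv.subtypeEquivRight (fun v => (hmem_s v).symm) with he
  set ψ : ({v : V // v ≠ r} → Fin d → ℝ) ≃ᵐ ((v : {v : V // v ∈ s}) → Fin d → ℝ) :=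
    MeasurableEquiv.piCongrLeft (fun _ : {v : V // v ∈ s} => (Fin d → ℝ)) e with hψ
  have hMP : MeasurePreserving ψ volume volume :=
    volume_measurePreserving_piCongrLeft (fun _ : {v : V // v ∈ s} => (Fin d → ℝ)) e
  set g : ((v : {v : V // v ∈ s}) → Fin d → ℝ) → ℝ≥0∞ :=
    fun y => Hfun r pa p ℓ r (Function.updateFinset (fun _ => x₀) s y) with hg
  have hgmeas : Measurable g := (hHmeas r).comp measurable_updateFinset
  have key2 : h r x₀ = ∫⁻ y, g y := by
    rw [key, hroot_desc]
    rfl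
  rw [key2, ← hMP.lintegral_comp hgmeas]
  have hupd : ∀ x : {v : V // v ≠ r} → Fin d → ℝ,
      Function.updateFinset (fun _ => x₀) s (ψ x) = extCfg r x₀ x := by
    intro x
    funext w
    by_cases hw : w = r
    · subst hw
      simp [Function.updateFinset, hrs, extCfg]
    · have hws : w ∈ s := (hmem_s w).2 hw
      have h1 : (⟨w, hws⟩ : {v : V // v ∈ s}) = e ⟨w, hw⟩ := by
        rw [he]; rfl
      have h2 : ψ x ⟨w, hws⟩ = x ⟨w, hw⟩ := by
        rw [h1, hψ]
        exact MeasurableEquiv.piCongrLeft_apply_apply (β := fun _ : {v : V // v ∈ s} => (Fin d → ℝ)) e x ⟨w, hw⟩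
      simp only [Function.updateFinset, hws, dif_pos, extCfg, hw, dite_false]
      rw [h2]
  have hins : insert r s = Finset.univ := by
    ext w
    simp only [Finset.mem_insert, hmem_s w, Finset.mem_univ, iff_true]
    tauto
  have hpt : ∀ x : {v : V // v ≠ r} → Fin d → ℝ, g (ψ x) =
      (∏ v : {v : V // v ≠ r}, p v.1 (x v, extCfg r x₀ x (pa v.1))) *
        ∏ l ∈ treeLeaves r pa, ℓ l (extCfg r x₀ x l) := by
    intro x
    rw [hg]
    simp only
    rw [hupd x]
    unfold Hfun
    rw [hroot_desc, hins, Finset.univ_inter]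
    congr 1
    rw [Finset.prod_subtype s hmem_s
      (fun w => p w (extCfg r x₀ x w, extCfg r x₀ x (pa w)))]
    refine Finset.prod_congr rfl fun v _ => ?_
    have : extCfg r x₀ x v.1 = x v := by
      simp [extCfg, v.2]
    rw [this]
  exact lintegral_congr hpt

end
end

section
/- Let d ≥ 1, let H and Σ̃ be symmetric positive definite d×d real matrices, let B be a d×d real matrix, and let β, η ∈ ℝᵈ. Then there exists a constant C ∈ ℝ such that for every x ∈ ℝᵈ: ∫_{ℝᵈ} exp(−½yᵀHy + ηᵀy) · φ_d(y; Bx + β, Σ̃) dy = exp(−½xᵀH'x + η'ᵀx + C), where H' = Bᵀ(H⁻¹ + Σ̃)⁻¹B and η' = Bᵀ(H⁻¹ + Σ̃)⁻¹(H⁻¹η − β). -/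
open MeasureTheory Matrix

noncomputable section

/-- Density of the `d`-dimensional Gaussian distribution with mean `m` and symmetric positive
definite covariance `S`, evaluated at `y`:
`(2π)^{-d/2} (det S)^{-1/2} exp(-½ (y-m)ᵀ S⁻¹ (y-m))`. -/
def gaussDens {d : ℕ} (y m : Fin d → ℝ) (S : Matrix (Fin d) (Fin d) ℝ) : ℝ :=
  (Real.sqrt ((2 * Real.pi) ^ d * S.det))⁻¹ *
    Real.exp (-(1 / 2) * ((y - m) ⬝ᵥ (S⁻¹ *ᵥ (y - m))))


lemma gauss1d {b : ℝ} (hb : 0 < b) (c : ℝ) :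
    ∫ x : ℝ, Real.exp (-b * x ^ 2 + c * x) = Real.sqrt (Real.pi / b) * Real.exp (c ^ 2 / (4 * b)) := by
  have h : ∀ x : ℝ, -b * x ^ 2 + c * x = -b * (x - c / (2 * b)) ^ 2 + c ^ 2 / (4 * b) := by
    intro x; field_simp; ring
  simp_rw [h, Real.exp_add, integral_mul_const]
  rw [integral_sub_right_eq_self (fun x => Real.exp (-b * x ^ 2)) (c / (2*b)), integral_gaussian]

lemma cov {d : ℕ} (M : Matrix (Fin d) (Fin d) ℝ) (hM : M.det ≠ 0) (f : (Fin d → ℝ) → ℝ) :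
    ∫ y : Fin d → ℝ, f y = |M.det| * ∫ z : Fin d → ℝ, f (M *ᵥ z) := by
  have : Invertible M := M.invertibleOfIsUnitDet (isUnit_iff_ne_zero.2 hM)
  let e : (Fin d → ℝ) ≃ᵐ (Fin d → ℝ) :=
    (Matrix.toLinearEquiv' M this).toContinuousLinearEquiv.toHomeomorph.toMeasurableEquiv
  have he : ∀ z, e z = M *ᵥ z := fun z => rfl
  have hmap : Measure.map e volume = ENNReal.ofReal |M.det|⁻¹ • volume := by
    have : Measure.map e volume = Measure.map (Matrix.toLin' M) volume := by
      congr 1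
    rw [this, Real.map_matrix_volume_pi_eq_smul_volume_pi hM, abs_inv]
  have h1 : ∫ z : Fin d → ℝ, f (M *ᵥ z) = ∫ y, f y ∂(Measure.map e volume) := by
    rw [integral_map_equiv]; rfl
  rw [h1, hmap, integral_smul_measure]
  have hd : |M.det| ≠ 0 := abs_ne_zero.2 hM
  simp [ENNReal.toReal_ofReal (inv_nonneg.2 (abs_nonneg _)), smul_eq_mul]
  field_simp

lemma dmv {d : ℕ} (M : Matrix (Fin d) (Fin d) ℝ) (u v : Fin d → ℝ) :
    u ⬝ᵥ (M *ᵥ v) = (Mᵀ *ᵥ u) ⬝ᵥ v := by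
  rw [dotProduct_mulVec, mulVec_transpose]

open scoped MatrixOrder in
lemma gaussK {d : ℕ} (A : Matrix (Fin d) (Fin d) ℝ) (hA : A.PosDef) :
    ∃ K : ℝ, 0 < K ∧ ∀ b : Fin d → ℝ,
      ∫ y : Fin d → ℝ, Real.exp (-(1/2) * (y ⬝ᵥ (A *ᵥ y)) + b ⬝ᵥ y)
        = K * Real.exp ((1/2) * (b ⬝ᵥ (A⁻¹ *ᵥ b))) := by
  have hAps := hA.posSemidef
  set S := CFC.sqrt A with hSdef
  have hSsym : Sᵀ = S := by
    have := (Matrix.nonneg_iff_posSemidef.mp (CFC.sqrt_nonneg A)).1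
    rwa [Matrix.IsHermitian, conjTranspose_eq_transpose_of_trivial] at this
  have hSS : S * S = A := CFC.sqrt_mul_sqrt_self A (Matrix.nonneg_iff_posSemidef.mpr hAps)
  have hdetA : A.det ≠ 0 := ne_of_gt hA.det_pos
  have hdetS : S.det ≠ 0 := by
    intro h
    apply hdetA
    rw [← hSS, det_mul, h, mul_zero]
  have hdetSu : IsUnit S.det := isUnit_iff_ne_zero.2 hdetS
  have hdetSi : (S⁻¹).det ≠ 0 := by
    rw [det_nonsing_inv, Ring.inverse_eq_inv']
    exact inv_ne_zero hdetS
  refine ⟨|(S⁻¹).det| * Real.sqrt (2 * Real.pi) ^ d, by positivity, fun b => ?_⟩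
  rw [cov S⁻¹ hdetSi]
  have key : ∀ z : Fin d → ℝ,
      (S⁻¹ *ᵥ z) ⬝ᵥ (A *ᵥ (S⁻¹ *ᵥ z)) = z ⬝ᵥ z := by
    intro z
    rw [mulVec_mulVec, dmv]
    congr 1
    rw [mulVec_mulVec, transpose_mul, transpose_nonsing_inv, hSsym]
    have hAsym : Aᵀ = A := by
      have := hA.1; rwa [Matrix.IsHermitian, conjTranspose_eq_transpose_of_trivial] at this
    rw [hAsym, ← hSS, show S⁻¹ * (S * S) * S⁻¹ = (1 : Matrix (Fin d) (Fin d) ℝ) by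
      rw [← Matrix.mul_assoc, nonsing_inv_mul _ hdetSu, Matrix.one_mul, mul_nonsing_inv _ hdetSu], one_mulVec]
  have keyb : ∀ z : Fin d → ℝ, b ⬝ᵥ (S⁻¹ *ᵥ z) = (S⁻¹ *ᵥ b) ⬝ᵥ z := by
    intro z; rw [dmv, transpose_nonsing_inv, hSsym]
  set c := S⁻¹ *ᵥ b with hc
  have step : ∀ z : Fin d → ℝ,
      Real.exp (-(1/2) * ((S⁻¹ *ᵥ z) ⬝ᵥ (A *ᵥ (S⁻¹ *ᵥ z))) + b ⬝ᵥ (S⁻¹ *ᵥ z))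
        = ∏ i, Real.exp (-(1/2) * (z i)^2 + c i * z i) := by
    intro z
    rw [key, keyb, ← Real.exp_sum]
    congr 1
    simp only [dotProduct]
    rw [Finset.mul_sum, ← Finset.sum_add_distrib]
    exact Finset.sum_congr rfl fun i _ => by ring
  simp_rw [step]
  rw [volume_pi, integral_fintype_prod_eq_prod (ι := Fin d) (fun i (t : ℝ) => Real.exp (-(1/2) * t^2 + c i * t))]
  have h1 : ∀ i : Fin d, (∫ t : ℝ, Real.exp (-(1/2) * t^2 + c i * t))
      = Real.sqrt (2 * Real.pi) * Real.exp ((c i)^2 / 2) := by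
    intro i
    have := gauss1d (b := 1/2) (by norm_num) (c i)
    rw [this]
    norm_num
    rw [mul_comm]
  simp_rw [h1]
  rw [Finset.prod_mul_distrib, Finset.prod_const, Finset.card_univ, Fintype.card_fin,
    ← Real.exp_sum]
  have h2 : ∑ i, (c i)^2 / 2 = (1/2) * (b ⬝ᵥ (A⁻¹ *ᵥ b)) := by
    have hcc : c ⬝ᵥ c = b ⬝ᵥ (A⁻¹ *ᵥ b) := by
      rw [← hSS, Matrix.mul_inv_rev, ← mulVec_mulVec, hc, dmv, transpose_nonsing_inv, hSsym,
        dotProduct_comm]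
    rw [← hcc]
    simp only [dotProduct]
    rw [Finset.mul_sum]
    exact Finset.sum_congr rfl fun i _ => by ring
  rw [h2]
  ring

lemma posdef_symm {d : ℕ} {M : Matrix (Fin d) (Fin d) ℝ} (hM : M.PosDef) : Mᵀ = M := by
  have := hM.1; rwa [Matrix.IsHermitian, conjTranspose_eq_transpose_of_trivial] at this

theorem stmt13 {d : ℕ} (hd : 1 ≤ d)
    (H St : Matrix (Fin d) (Fin d) ℝ) (hH : H.PosDef) (hSt : St.PosDef)
    (B : Matrix (Fin d) (Fin d) ℝ) (β η : Fin d → ℝ) :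
    ∃ C : ℝ, ∀ x : Fin d → ℝ,
      (∫ y : Fin d → ℝ,
          Real.exp (-(1 / 2) * (y ⬝ᵥ (H *ᵥ y)) + η ⬝ᵥ y) * gaussDens y (B *ᵥ x + β) St)
        = Real.exp
            (-(1 / 2) * (x ⬝ᵥ ((Bᵀ * (H⁻¹ + St)⁻¹ * B) *ᵥ x))
              + (Bᵀ *ᵥ ((H⁻¹ + St)⁻¹ *ᵥ (H⁻¹ *ᵥ η - β))) ⬝ᵥ x + C) := by
  have hStI : (St⁻¹).PosDef := hSt.inv
  have hHI : (H⁻¹).PosDef := hH.inv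
  set A := H + St⁻¹ with hAdef
  have hA : A.PosDef := hH.add hStI
  have hSum : (H⁻¹ + St).PosDef := hHI.add hSt
  set K := (H⁻¹ + St)⁻¹ with hKdef
  -- units
  have uH : IsUnit H.det := isUnit_iff_ne_zero.2 hH.det_pos.ne'
  have uSt : IsUnit St.det := isUnit_iff_ne_zero.2 hSt.det_pos.ne'
  have uA : IsUnit A.det := isUnit_iff_ne_zero.2 hA.det_pos.ne'
  have uSum : IsUnit (H⁻¹ + St).det := isUnit_iff_ne_zero.2 hSum.det_pos.ne'
  -- symmetry
  have sH : Hᵀ = H := posdef_symm hH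
  have sSt : Stᵀ = St := posdef_symm hSt
  have sHI : (H⁻¹)ᵀ = H⁻¹ := by rw [transpose_nonsing_inv, sH]
  have sStI : (St⁻¹)ᵀ = St⁻¹ := by rw [transpose_nonsing_inv, sSt]
  have sA : Aᵀ = A := posdef_symm hA
  have sAI : (A⁻¹)ᵀ = A⁻¹ := by rw [transpose_nonsing_inv, sA]
  have sK : Kᵀ = K := by rw [hKdef, transpose_nonsing_inv, posdef_symm hSum]
  -- identity (ii)
  have hii' : St⁻¹ * A⁻¹ = K * H⁻¹ := by
    have h1 : A * St = H * (H⁻¹ + St) := by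
      rw [hAdef, Matrix.add_mul, Matrix.mul_add, nonsing_inv_mul _ uSt,
        mul_nonsing_inv _ uH, add_comm]
    calc St⁻¹ * A⁻¹ = (A * St)⁻¹ := by rw [Matrix.mul_inv_rev]
    _ = (H * (H⁻¹ + St))⁻¹ := by rw [h1]
    _ = K * H⁻¹ := by rw [Matrix.mul_inv_rev, hKdef]
  have hii : A⁻¹ * St⁻¹ = H⁻¹ * K := by
    have := congrArg Matrix.transpose hii'
    rwa [transpose_mul, transpose_mul, sStI, sAI, sK, sHI] at this
  -- identity (i)
  have hi : St⁻¹ * A⁻¹ * St⁻¹ = St⁻¹ - K := by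
    have h2 : St⁻¹ * A⁻¹ * A = St⁻¹ := by
      rw [Matrix.mul_assoc, nonsing_inv_mul _ uA, Matrix.mul_one]
    have h3 : St⁻¹ * A⁻¹ * H = K := by
      rw [hii', Matrix.mul_assoc, nonsing_inv_mul _ uH, Matrix.mul_one]
    have h4 : St⁻¹ * A⁻¹ * A - St⁻¹ * A⁻¹ * St⁻¹ = K := by
      rw [← Matrix.mul_sub, hAdef, add_sub_cancel_right, h3]
    rw [h2] at h4
    linear_combination (norm := module) -h4
  -- move helper
  have hmove : ∀ (M : Matrix (Fin d) (Fin d) ℝ) (u w : Fin d → ℝ),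
      (M *ᵥ u) ⬝ᵥ w = u ⬝ᵥ (Mᵀ *ᵥ w) := by
    intro M u w; rw [dmv, transpose_transpose]
  -- quadratic form expansions
  have t2 : ∀ m, η ⬝ᵥ (A⁻¹ *ᵥ (St⁻¹ *ᵥ m)) = (H⁻¹ *ᵥ η) ⬝ᵥ (K *ᵥ m) := by
    intro m
    rw [mulVec_mulVec, hii, ← mulVec_mulVec, dmv, sHI]
  have t3 : ∀ m, (St⁻¹ *ᵥ m) ⬝ᵥ (A⁻¹ *ᵥ η) = (H⁻¹ *ᵥ η) ⬝ᵥ (K *ᵥ m) := by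
    intro m
    rw [hmove, sStI, mulVec_mulVec, hii', ← mulVec_mulVec, dmv, sK, dotProduct_comm]
  have t4 : ∀ m, (St⁻¹ *ᵥ m) ⬝ᵥ (A⁻¹ *ᵥ (St⁻¹ *ᵥ m))
      = m ⬝ᵥ (St⁻¹ *ᵥ m) - m ⬝ᵥ (K *ᵥ m) := by
    intro m
    rw [hmove, sStI, mulVec_mulVec, mulVec_mulVec, hi, sub_mulVec, dotProduct_sub]
  have e1 : ∀ m, (η + St⁻¹ *ᵥ m) ⬝ᵥ (A⁻¹ *ᵥ (η + St⁻¹ *ᵥ m))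
      = η ⬝ᵥ (A⁻¹ *ᵥ η) + 2 * ((H⁻¹ *ᵥ η) ⬝ᵥ (K *ᵥ m))
        + (m ⬝ᵥ (St⁻¹ *ᵥ m) - m ⬝ᵥ (K *ᵥ m)) := by
    intro m
    rw [mulVec_add, add_dotProduct, dotProduct_add, dotProduct_add, t2, t3, t4]
    ring
  have e2 : ∀ x, (B *ᵥ x + β) ⬝ᵥ (K *ᵥ (B *ᵥ x + β))
      = x ⬝ᵥ ((Bᵀ * K * B) *ᵥ x) + 2 * ((Bᵀ *ᵥ (K *ᵥ β)) ⬝ᵥ x) + β ⬝ᵥ (K *ᵥ β) := by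
    intro x
    have q1 : (B *ᵥ x) ⬝ᵥ (K *ᵥ (B *ᵥ x)) = x ⬝ᵥ ((Bᵀ * K * B) *ᵥ x) := by
      rw [hmove, mulVec_mulVec, mulVec_mulVec]
    have q2 : (B *ᵥ x) ⬝ᵥ (K *ᵥ β) = (Bᵀ *ᵥ (K *ᵥ β)) ⬝ᵥ x := by
      rw [hmove, dotProduct_comm]
    have q3 : β ⬝ᵥ (K *ᵥ (B *ᵥ x)) = (Bᵀ *ᵥ (K *ᵥ β)) ⬝ᵥ x := by
      rw [dmv, sK, dmv]
    rw [mulVec_add, add_dotProduct, dotProduct_add, dotProduct_add, q1, q2, q3]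
    ring
  have e3 : ∀ x, (H⁻¹ *ᵥ η) ⬝ᵥ (K *ᵥ (B *ᵥ x + β))
      = (Bᵀ *ᵥ (K *ᵥ (H⁻¹ *ᵥ η))) ⬝ᵥ x + (H⁻¹ *ᵥ η) ⬝ᵥ (K *ᵥ β) := by
    intro x
    rw [mulVec_add, dotProduct_add]
    congr 1
    rw [dmv, sK, dmv]
  have e4 : ∀ x, (Bᵀ *ᵥ (K *ᵥ (H⁻¹ *ᵥ η - β))) ⬝ᵥ x
      = (Bᵀ *ᵥ (K *ᵥ (H⁻¹ *ᵥ η))) ⬝ᵥ x - (Bᵀ *ᵥ (K *ᵥ β)) ⬝ᵥ x := by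
    intro x
    rw [mulVec_sub, mulVec_sub, sub_dotProduct]
  obtain ⟨Kg, hKg, hKgeq⟩ := gaussK A hA
  have hNin : (0:ℝ) < (2 * Real.pi) ^ d * St.det := by
    have := hSt.det_pos; positivity
  set N := Real.sqrt ((2 * Real.pi) ^ d * St.det) with hNdef
  have hNpos : 0 < N := Real.sqrt_pos.2 hNin
  refine ⟨Real.log (N⁻¹ * Kg) + ((1/2) * (η ⬝ᵥ (A⁻¹ *ᵥ η)) - (1/2) * (β ⬝ᵥ (K *ᵥ β))
      + (H⁻¹ *ᵥ η) ⬝ᵥ (K *ᵥ β)), fun x => ?_⟩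
  have point : ∀ y : Fin d → ℝ,
      Real.exp (-(1 / 2) * (y ⬝ᵥ (H *ᵥ y)) + η ⬝ᵥ y) * gaussDens y (B *ᵥ x + β) St
      = (N⁻¹ * Real.exp (-(1/2) * ((B *ᵥ x + β) ⬝ᵥ (St⁻¹ *ᵥ (B *ᵥ x + β)))))
        * Real.exp (-(1/2) * (y ⬝ᵥ (A *ᵥ y)) + (η + St⁻¹ *ᵥ (B *ᵥ x + β)) ⬝ᵥ y) := by
    intro y
    set m := B *ᵥ x + β
    unfold gaussDens
    rw [← hNdef]
    have hAy : y ⬝ᵥ (A *ᵥ y) = y ⬝ᵥ (H *ᵥ y) + y ⬝ᵥ (St⁻¹ *ᵥ y) := by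
      rw [hAdef, add_mulVec, dotProduct_add]
    have hc1 : y ⬝ᵥ (St⁻¹ *ᵥ m) = (St⁻¹ *ᵥ m) ⬝ᵥ y := dotProduct_comm _ _
    have hc2 : m ⬝ᵥ (St⁻¹ *ᵥ y) = (St⁻¹ *ᵥ m) ⬝ᵥ y := by rw [dmv, sStI]
    have hexp : (y - m) ⬝ᵥ (St⁻¹ *ᵥ (y - m))
        = y ⬝ᵥ (St⁻¹ *ᵥ y) - 2 * ((St⁻¹ *ᵥ m) ⬝ᵥ y) + m ⬝ᵥ (St⁻¹ *ᵥ m) := by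
      rw [mulVec_sub, dotProduct_sub, sub_dotProduct, sub_dotProduct, hc1, hc2]
      ring
    have hbxy : (η + St⁻¹ *ᵥ m) ⬝ᵥ y = η ⬝ᵥ y + (St⁻¹ *ᵥ m) ⬝ᵥ y := add_dotProduct _ _ _
    rw [hexp, hAy, hbxy, mul_left_comm, ← Real.exp_add, mul_assoc, ← Real.exp_add]
    congr 1
    ring
  simp_rw [point]
  rw [MeasureTheory.integral_const_mul, hKgeq (η + St⁻¹ *ᵥ (B *ᵥ x + β))]
  have hS : -(1/2) * ((B *ᵥ x + β) ⬝ᵥ (St⁻¹ *ᵥ (B *ᵥ x + β)))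
      + (1/2) * ((η + St⁻¹ *ᵥ (B *ᵥ x + β)) ⬝ᵥ (A⁻¹ *ᵥ (η + St⁻¹ *ᵥ (B *ᵥ x + β))))
      = -(1 / 2) * (x ⬝ᵥ ((Bᵀ * K * B) *ᵥ x)) + (Bᵀ *ᵥ (K *ᵥ (H⁻¹ *ᵥ η - β))) ⬝ᵥ x
        + ((1/2) * (η ⬝ᵥ (A⁻¹ *ᵥ η)) - (1/2) * (β ⬝ᵥ (K *ᵥ β)) + (H⁻¹ *ᵥ η) ⬝ᵥ (K *ᵥ β)) := by
    rw [e1, e2, e3, e4]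
    ring
  have hrhs : -(1 / 2) * (x ⬝ᵥ ((Bᵀ * K * B) *ᵥ x)) + (Bᵀ *ᵥ (K *ᵥ (H⁻¹ *ᵥ η - β))) ⬝ᵥ x
      + (Real.log (N⁻¹ * Kg) + ((1/2) * (η ⬝ᵥ (A⁻¹ *ᵥ η)) - (1/2) * (β ⬝ᵥ (K *ᵥ β))
        + (H⁻¹ *ᵥ η) ⬝ᵥ (K *ᵥ β)))
      = (-(1/2) * ((B *ᵥ x + β) ⬝ᵥ (St⁻¹ *ᵥ (B *ᵥ x + β)))
        + (1/2) * ((η + St⁻¹ *ᵥ (B *ᵥ x + β)) ⬝ᵥ (A⁻¹ *ᵥ (η + St⁻¹ *ᵥ (B *ᵥ x + β)))))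
        + Real.log (N⁻¹ * Kg) := by
    rw [hS]; ring
  rw [hrhs, Real.exp_add, Real.exp_add,
    Real.exp_log (by positivity : (0:ℝ) < N⁻¹ * Kg)]
  ring


end
end
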